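/- arXiv:2412.08870 — 10 statements merged into one kernel-verified Lean document; each statement's English description precedes it below -/
import Mathlib

section
/- Let K ≥ 1 be a natural number and let c : {0,…,K} → ℂ satisfy c_k ≠ 0 for all k and the alternating normalization condition Σ_{k=0}^{K} (−1)^k |c_k|² = 0. Define h_k = (Σ_{j=0}^{k} (−1)^{j+k} |c_j|²) / (conj(c_k) · c_{k+1}) for 0 ≤ k ≤ K−1, and let T ∈ M_{K+1}(ℂ) be the Hermitian tridiagonal matrix with zero diagonal, T_{k,k+1} = h_k and T_{k+1,k} = conj(h_k), all other entries zero. Then T v_+ = v_+ and T v_− = −v_−, where v_± ∈ ℂ^{K+1} has components (v_±)_k = (±1)^k c_k. -/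
/-!
Write `S k = ∑_{j ≤ k} (-1)^(j+k) |c j|²`. Then `S 0 = |c 0|²`, `S (k-1) + S k = |c k|²`,
and the normalization says `S K = 0`. For `v k = ε^k c k` with `ε² = 1`, row `k` of `T v` is
`ε^(k+1) (h k c (k+1) + conj (h (k-1)) c (k-1))`. The two neighbor terms are `S k / conj (c k)`
and `S (k-1) / conj (c k)`, which add up to `|c k|² / conj (c k) = c k`; in rows `0` and `K`,
where one neighbor is missing, the formulas still hold because `S K = 0` and `S 0 = |c 0|²`.
-/

open Finset ComplexConjugate

theorem Matrix.mulVec_apply_of_tridiagonal {R : Type*} [NonUnitalNonAssocSemiring R] {n : ℕ}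
    {T : Matrix (Fin (n + 1)) (Fin (n + 1)) R} {u l : ℕ → R}
    (hT : ∀ p q : Fin (n + 1), T p q =
      if (q : ℕ) = (p : ℕ) + 1 then u p else if (p : ℕ) = (q : ℕ) + 1 then l q else 0)
    (w : ℕ → R) (i : Fin (n + 1)) :
    T.mulVec (fun k => w k) i =
      (if (i : ℕ) < n then u i * w (i + 1) else 0) +
        if (i : ℕ) = 0 then 0 else l (i - 1) * w (i - 1) := by
  have hterm : ∀ q : Fin (n + 1), T i q * w q =
      (if (i : ℕ) + 1 = q then u i * w q else 0) +
        if (i : ℕ) = 0 then 0 else if (i : ℕ) - 1 = q then l q * w q else 0 := by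
    intro q
    rw [hT]
    split_ifs <;> first | omega | simp_all
  simp only [Matrix.mulVec, dotProduct, hterm, sum_add_distrib]
  rw [Fin.sum_univ_eq_sum_range (fun q => if (i : ℕ) + 1 = q then u i * w q else 0),
    Fin.sum_univ_eq_sum_range
      (fun q => if (i : ℕ) = 0 then 0 else if (i : ℕ) - 1 = q then l q * w q else 0),
    sum_ite_eq]
  congr 1
  · simp only [mem_range, Nat.add_lt_add_iff_right]
  · split_ifs with hi0
    · exact sum_const_zero
    · rw [sum_ite_eq, if_pos (mem_range.2 (by omega))]

noncomputable def altPartialSum (c : ℕ → ℂ) (k : ℕ) : ℂ :=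
  ∑ j ∈ range (k + 1), (-1 : ℂ) ^ (j + k) * (‖c j‖ ^ 2 : ℝ)

section AltPartialSum

variable (c : ℕ → ℂ)

theorem altPartialSum_zero : altPartialSum c 0 = conj (c 0) * c 0 := by
  simp [altPartialSum, Complex.conj_mul']

theorem altPartialSum_add_altPartialSum_succ (k : ℕ) :
    altPartialSum c k + altPartialSum c (k + 1) = conj (c (k + 1)) * c (k + 1) := by
  have hsign : ∀ j, (-1 : ℂ) ^ (j + (k + 1)) = -(-1) ^ (j + k) := fun j => by
    rw [← add_assoc, pow_succ, mul_neg_one]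
  simp only [altPartialSum, sum_range_succ _ (k + 1), hsign, neg_mul, sum_neg_distrib,
    Complex.conj_mul']
  rw [Odd.neg_one_pow ⟨k, by ring⟩]
  push_cast
  ring

theorem conj_altPartialSum (k : ℕ) : conj (altPartialSum c k) = altPartialSum c k := by
  simp [altPartialSum]

theorem altPartialSum_eq_zero_of_alternating_sum_eq_zero {K : ℕ}
    (hnorm : ∑ k ∈ range (K + 1), (-1 : ℂ) ^ k * (‖c k‖ ^ 2 : ℝ) = 0) :
    altPartialSum c K = 0 := by
  simp only [altPartialSum, pow_add, mul_right_comm _ ((-1 : ℂ) ^ K), ← sum_mul, hnorm,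
    zero_mul]

end AltPartialSum

section ParityEigenvectors

variable {K : ℕ} {c h : ℕ → ℂ} (hc : ∀ k ≤ K, c k ≠ 0)
  (hh : ∀ k < K, h k = altPartialSum c k / (conj (c k) * c (k + 1)))
include hc hh

theorem upper_neighbor_term_eq (hS : altPartialSum c K = 0) {i : ℕ} (hi : i ≤ K) :
    (if i < K then h i * c (i + 1) else 0) = altPartialSum c i / conj (c i) := by
  split_ifs with hiK
  · have := hc (i + 1) hiK
    rw [hh i hiK]
    field_simp
  · rw [show i = K by omega, hS, zero_div]

theorem lower_neighbor_term_eq {i : ℕ} (hi : i ≤ K) :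
    (if i = 0 then 0 else conj (h (i - 1)) * c (i - 1)) =
      c i - altPartialSum c i / conj (c i) := by
  have hci : conj (c i) ≠ 0 := (map_ne_zero _).2 (hc i hi)
  split_ifs with hi0
  · subst hi0
    rw [altPartialSum_zero, mul_div_cancel_left₀ _ hci, sub_self]
  · obtain ⟨m, rfl⟩ := Nat.exists_eq_add_one_of_ne_zero hi0
    have := hc m (by omega)
    rw [Nat.add_sub_cancel, hh m (by omega), map_div₀, map_mul, conj_altPartialSum,
      Complex.conj_conj]
    field_simp
    linear_combination altPartialSum_add_altPartialSum_succ c m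

theorem mulVec_eq_smul_of_sq_eq_one
    (hnorm : ∑ k ∈ range (K + 1), (-1 : ℂ) ^ k * (‖c k‖ ^ 2 : ℝ) = 0)
    {T : Matrix (Fin (K + 1)) (Fin (K + 1)) ℂ}
    (hT : ∀ p q : Fin (K + 1), T p q =
      if (q : ℕ) = (p : ℕ) + 1 then h p
      else if (p : ℕ) = (q : ℕ) + 1 then conj (h q)
      else 0)
    {ε : ℂ} (hε : ε ^ 2 = 1) :
    T.mulVec (fun k : Fin (K + 1) => ε ^ (k : ℕ) * c k) =
      ε • fun k : Fin (K + 1) => ε ^ (k : ℕ) * c k := by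
  ext ⟨i, hi⟩
  have hiK : i ≤ K := Nat.le_of_lt_succ hi
  have hS := altPartialSum_eq_zero_of_alternating_sum_eq_zero c hnorm
  have hpow : i ≠ 0 → ε ^ (i - 1) = ε ^ (i + 1) := fun hi0 => by
    rw [show i + 1 = i - 1 + 2 by omega, pow_add, hε, mul_one]
  rw [Matrix.mulVec_apply_of_tridiagonal (l := fun q => conj (h q)) hT (fun k => ε ^ k * c k),
    Pi.smul_apply, smul_eq_mul]
  calc _ = ε ^ (i + 1) * ((if i < K then h i * c (i + 1) else 0) +
        if i = 0 then 0 else conj (h (i - 1)) * c (i - 1)) := by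
        rcases eq_or_ne i 0 with rfl | hi0
        · simp only [if_true]
          split_ifs <;> ring
        · simp only [hi0, if_false, hpow hi0]
          split_ifs <;> ring
    _ = ε * (ε ^ i * c i) := by
        rw [upper_neighbor_term_eq hc hh hS hiK, lower_neighbor_term_eq hc hh hiK]
        ring

end ParityEigenvectors

theorem stmt_0_general (K : ℕ) (c : ℕ → ℂ)
    (hc : ∀ k ≤ K, c k ≠ 0)
    (hnorm : ∑ k ∈ range (K + 1), (-1 : ℂ) ^ k * (‖c k‖ ^ 2 : ℝ) = 0)
    (h : ℕ → ℂ)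
    (hh : ∀ k < K, h k =
      (∑ j ∈ range (k + 1), (-1 : ℂ) ^ (j + k) * (‖c j‖ ^ 2 : ℝ)) /
        ((starRingEnd ℂ) (c k) * c (k + 1)))
    (T : Matrix (Fin (K + 1)) (Fin (K + 1)) ℂ)
    (hT : ∀ p q : Fin (K + 1), T p q =
      if (q : ℕ) = (p : ℕ) + 1 then h p
      else if (p : ℕ) = (q : ℕ) + 1 then (starRingEnd ℂ) (h q)
      else 0)
    (vplus vminus : Fin (K + 1) → ℂ)
    (hvplus : ∀ k : Fin (K + 1), vplus k = (1 : ℂ) ^ (k : ℕ) * c k)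
    (hvminus : ∀ k : Fin (K + 1), vminus k = (-1 : ℂ) ^ (k : ℕ) * c k) :
    T.mulVec vplus = vplus ∧ T.mulVec vminus = -vminus := by
  rw [funext hvplus, funext hvminus]
  constructor
  · simpa using mulVec_eq_smul_of_sq_eq_one hc hh hnorm hT (one_pow 2)
  · simpa using mulVec_eq_smul_of_sq_eq_one hc hh hnorm hT (neg_one_sq (R := ℂ))

/-- Explicit nearest-neighbor tridiagonal Hamiltonian for the
logical parity manifold (Eq. H0Sol of the paper): given Fock-grid coefficients
`c₀, …, c_K` (all nonzero) satisfying the alternating normalization condition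
`∑ (−1)^k |c_k|² = 0`, the Hermitian tridiagonal matrix `T` with zero diagonal
and upper entries `T_{k,k+1} = (∑_{j≤k} (−1)^{j+k} |c_j|²)/(conj(c_k)·c_{k+1})`
satisfies `T v₊ = v₊` and `T v₋ = −v₋`, where `(v_±)_k = (±1)^k c_k`. -/
theorem stmt_0 (K : ℕ) (hK : 1 ≤ K) (c : ℕ → ℂ)
    (hc : ∀ k ≤ K, c k ≠ 0)
    (hnorm : ∑ k ∈ range (K + 1), (-1 : ℂ) ^ k * (‖c k‖ ^ 2 : ℝ) = 0)
    (h : ℕ → ℂ)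
    (hh : ∀ k < K, h k =
      (∑ j ∈ range (k + 1), (-1 : ℂ) ^ (j + k) * (‖c j‖ ^ 2 : ℝ)) /
        ((starRingEnd ℂ) (c k) * c (k + 1)))
    (T : Matrix (Fin (K + 1)) (Fin (K + 1)) ℂ)
    (hT : ∀ p q : Fin (K + 1), T p q =
      if (q : ℕ) = (p : ℕ) + 1 then h p
      else if (p : ℕ) = (q : ℕ) + 1 then (starRingEnd ℂ) (h q)
      else 0)
    (vplus vminus : Fin (K + 1) → ℂ)
    (hvplus : ∀ k : Fin (K + 1), vplus k = (1 : ℂ) ^ (k : ℕ) * c k)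
    (hvminus : ∀ k : Fin (K + 1), vminus k = (-1 : ℂ) ^ (k : ℕ) * c k) :
    T.mulVec vplus = vplus ∧ T.mulVec vminus = -vminus :=
  stmt_0_general K c hc hnorm h hh T hT vplus vminus hvplus hvminus
end

section
/- Let K ≥ 1 be a natural number and let c : {0,…,K} → ℂ satisfy c_k ≠ 0 for all k. Suppose T ∈ M_{K+1}(ℂ) is Hermitian, has nonzero entries only on the first off-diagonals (T_{k,k'} = 0 unless |k−k'| = 1), and satisfies T v = v where v ∈ ℂ^{K+1} has components v_k = c_k. Then necessarily Σ_{k=0}^{K} (−1)^k |c_k|² = 0, and the off-diagonal entries are uniquely determined: T_{k,k+1} = (Σ_{j=0}^{k} (−1)^{j+k} |c_j|²) / (conj(c_k) · c_{k+1}) for every 0 ≤ k ≤ K−1. -/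
open Finset

lemma conj_mul_self' (z : ℂ) : (starRingEnd ℂ) z * z = ((‖z‖^2 : ℝ) : ℂ) := by
  rw [mul_comm, Complex.mul_conj, Complex.normSq_eq_norm_sq]

noncomputable def Saux (c : ℕ → ℂ) (k : ℕ) : ℂ :=
  ∑ j ∈ range (k + 1), (-1 : ℂ) ^ (j + k) * ((‖c j‖ ^ 2 : ℝ) : ℂ)

lemma Saux_real (c : ℕ → ℂ) (k : ℕ) : (starRingEnd ℂ) (Saux c k) = Saux c k := by
  unfold Saux
  rw [map_sum]
  refine Finset.sum_congr rfl fun j _ => ?_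
  simp [map_mul, map_pow, Complex.conj_ofReal]

lemma Saux_zero (c : ℕ → ℂ) : Saux c 0 = ((‖c 0‖ ^ 2 : ℝ) : ℂ) := by
  simp [Saux]

lemma Saux_succ (c : ℕ → ℂ) (k : ℕ) :
    Saux c (k + 1) = ((‖c (k + 1)‖ ^ 2 : ℝ) : ℂ) - Saux c k := by
  unfold Saux
  rw [Finset.sum_range_succ]
  have h1 : ∀ j : ℕ, (-1 : ℂ) ^ (j + (k + 1)) = -(-1 : ℂ) ^ (j + k) := by
    intro j
    rw [show j + (k + 1) = (j + k) + 1 by ring, pow_succ]; ring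
  have h2 : (-1 : ℂ) ^ (k + 1 + (k + 1)) = 1 :=
    Even.neg_one_pow ⟨k + 1, by ring⟩
  rw [h2]
  have : ∑ j ∈ range (k + 1), (-1 : ℂ) ^ (j + (k + 1)) * ((‖c j‖ ^ 2 : ℝ) : ℂ)
      = -∑ j ∈ range (k + 1), (-1 : ℂ) ^ (j + k) * ((‖c j‖ ^ 2 : ℝ) : ℂ) := by
    rw [← Finset.sum_neg_distrib]
    refine Finset.sum_congr rfl fun j _ => ?_
    rw [h1]; ring
  rw [this]; ring

/-- Uniqueness and consistency of the nearest-neighbor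
eigenstate recurrence (Eq. eigenstateEqn of the paper): if a Hermitian matrix
`T` with nonzero entries only on the first off-diagonals satisfies `T v = v`
with `v_k = c_k` and all `c_k ≠ 0`, then the alternating normalization
condition `∑ (−1)^k |c_k|² = 0` must hold, and the off-diagonal entries are
uniquely given by `T_{k,k+1} = (∑_{j≤k} (−1)^{j+k} |c_j|²)/(conj(c_k)·c_{k+1})`. -/
theorem stmt_1 (K : ℕ) (hK : 1 ≤ K) (c : ℕ → ℂ)
    (hc : ∀ k ≤ K, c k ≠ 0)
    (T : Matrix (Fin (K + 1)) (Fin (K + 1)) ℂ)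
    (hHerm : T.IsHermitian)
    (hNN : ∀ p q : Fin (K + 1),
      ¬((q : ℕ) = (p : ℕ) + 1 ∨ (p : ℕ) = (q : ℕ) + 1) → T p q = 0)
    (v : Fin (K + 1) → ℂ)
    (hv : ∀ k : Fin (K + 1), v k = c k)
    (heig : T.mulVec v = v) :
    (∑ k ∈ range (K + 1), (-1 : ℂ) ^ k * (‖c k‖ ^ 2 : ℝ) = 0) ∧
    (∀ k : ℕ, (hk : k < K) →
      T ⟨k, by omega⟩ ⟨k + 1, by omega⟩ =
        (∑ j ∈ range (k + 1), (-1 : ℂ) ^ (j + k) * (‖c j‖ ^ 2 : ℝ)) /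
          ((starRingEnd ℂ) (c k) * c (k + 1))) := by
  have hrow : ∀ p : Fin (K + 1), ∑ q : Fin (K + 1), T p q * c q = c p := by
    intro p
    simpa [Matrix.mulVec, dotProduct, hv] using congrFun heig p
  -- main recurrence
  have hb : ∀ k : ℕ, (hkk : k < K) →
      (starRingEnd ℂ) (c k) * c (k + 1) * T ⟨k, by omega⟩ ⟨k + 1, by omega⟩ = Saux c k := by
    intro k
    induction k with
    | zero =>
      intro hk
      have e1 : ∑ q : Fin (K + 1), T ⟨0, by omega⟩ q * c q = c 0 := hrow ⟨0, by omega⟩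
      rw [Finset.sum_eq_single_of_mem (⟨1, by omega⟩ : Fin (K + 1)) (Finset.mem_univ _)
        (fun q _ hq => by
          have : T ⟨0, by omega⟩ q = 0 := by
            apply hNN
            rintro (h | h)
            · exact hq (Fin.ext (by simpa using h))
            · simp at h
          rw [this, zero_mul])] at e1
      rw [Saux_zero, ← conj_mul_self' (c 0)]
      calc (starRingEnd ℂ) (c 0) * c (0 + 1) * T ⟨0, by omega⟩ ⟨0 + 1, by omega⟩
          = (starRingEnd ℂ) (c 0) * (T ⟨0, by omega⟩ ⟨1, by omega⟩ * c 1) := by ring_nf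
        _ = (starRingEnd ℂ) (c 0) * c 0 := by rw [e1]
    | succ k ih =>
      intro hk
      have hkK : k < K := by omega
      have ihk := ih hkK
      have e1 : ∑ q : Fin (K + 1), T ⟨k + 1, by omega⟩ q * c q = c (k + 1) :=
        hrow ⟨k + 1, by omega⟩
      rw [Finset.sum_eq_add_of_mem (⟨k, by omega⟩ : Fin (K + 1)) (⟨k + 2, by omega⟩ : Fin (K + 1))
        (Finset.mem_univ _) (Finset.mem_univ _) (by intro h; exact absurd (congrArg Fin.val h) (by simp))
        (fun q _ hq => by
          have : T ⟨k + 1, by omega⟩ q = 0 := by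
            apply hNN
            rintro (h | h)
            · apply hq.2; apply Fin.ext; simp only [Fin.val_mk] at h ⊢; omega
            · apply hq.1; apply Fin.ext; simp only [Fin.val_mk] at h ⊢; omega
          rw [this, zero_mul])] at e1
      have hT : T ⟨k + 1, by omega⟩ ⟨k, by omega⟩
          = (starRingEnd ℂ) (T ⟨k, by omega⟩ ⟨k + 1, by omega⟩) :=
        (hHerm.apply _ _).symm
      have key : (starRingEnd ℂ) (c (k + 1)) * c (k + 2) * T ⟨k + 1, by omega⟩ ⟨k + 2, by omega⟩
          = (starRingEnd ℂ) (c (k + 1)) *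
              (T ⟨k + 1, by omega⟩ ⟨k, by omega⟩ * c k
                + T ⟨k + 1, by omega⟩ ⟨k + 2, by omega⟩ * c (k + 2))
            - (starRingEnd ℂ) ((starRingEnd ℂ) (c k) * c (k + 1)
                * T ⟨k, by omega⟩ ⟨k + 1, by omega⟩) := by
        rw [hT]
        simp only [map_mul, RingHom.id_apply, Complex.conj_conj]
        ring
      rw [e1, ihk, Saux_real, conj_mul_self'] at key
      show (starRingEnd ℂ) (c (k + 1)) * c (k + 2) * T ⟨k + 1, by omega⟩ ⟨k + 2, by omega⟩
          = Saux c (k + 1)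
      rw [key, Saux_succ]
  have hbdiv : ∀ k : ℕ, (hk : k < K) →
      T ⟨k, by omega⟩ ⟨k + 1, by omega⟩ =
        (∑ j ∈ range (k + 1), (-1 : ℂ) ^ (j + k) * (‖c j‖ ^ 2 : ℝ)) /
          ((starRingEnd ℂ) (c k) * c (k + 1)) := by
    intro k hk
    have h1 := hb k hk
    have hne : (starRingEnd ℂ) (c k) * c (k + 1) ≠ 0 := by
      apply mul_ne_zero
      · simpa using hc k (by omega)
      · exact hc (k + 1) (by omega)
    rw [eq_div_iff hne]
    have hid : (∑ j ∈ range (k + 1), (-1 : ℂ) ^ (j + k) * ((‖c j‖ ^ 2 : ℝ) : ℂ)) = Saux c k := rfl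
    rw [hid, ← h1]; ring
  refine ⟨?_, hbdiv⟩
  -- alternating sum condition, from last row
  obtain ⟨m, rfl⟩ : ∃ m, K = m + 1 := ⟨K - 1, by omega⟩
  have e1 : ∑ q : Fin (m + 1 + 1), T ⟨m + 1, by omega⟩ q * c q = c (m + 1) :=
    hrow ⟨m + 1, by omega⟩
  rw [Finset.sum_eq_single_of_mem (⟨m, by omega⟩ : Fin (m + 1 + 1)) (Finset.mem_univ _)
    (fun q _ hq => by
      have : T ⟨m + 1, by omega⟩ q = 0 := by
        apply hNN
        rintro (h | h)
        · simp only [Fin.val_mk] at h; omega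
        · apply hq; apply Fin.ext; simp only [Fin.val_mk] at h ⊢; omega
      rw [this, zero_mul])] at e1
  have hT : T ⟨m + 1, by omega⟩ ⟨m, by omega⟩
      = (starRingEnd ℂ) (T ⟨m, by omega⟩ ⟨m + 1, by omega⟩) := (hHerm.apply _ _).symm
  have hbm := hb m (by omega)
  -- S m = ‖c (m+1)‖²
  have hSm : Saux c m = ((‖c (m + 1)‖ ^ 2 : ℝ) : ℂ) := by
    have : (starRingEnd ℂ) (c (m + 1)) * (T ⟨m + 1, by omega⟩ ⟨m, by omega⟩ * c m)
        = (starRingEnd ℂ) (c (m + 1)) * c (m + 1) := by rw [e1]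
    rw [conj_mul_self', hT] at this
    rw [← Saux_real, ← hbm]
    rw [← this]
    simp only [map_mul, Complex.conj_conj]
    ring
  -- now compute the alternating sum
  have hfact : Saux c m = (-1 : ℂ) ^ m * ∑ j ∈ range (m + 1), (-1 : ℂ) ^ j * (‖c j‖ ^ 2 : ℝ) := by
    unfold Saux
    rw [Finset.mul_sum]
    refine Finset.sum_congr rfl fun j _ => ?_
    rw [pow_add]; ring
  have hm1 : ((-1 : ℂ) ^ m) * ((-1 : ℂ) ^ m) = 1 := by
    rw [← pow_add]; exact Even.neg_one_pow ⟨m, by ring⟩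
  rw [Finset.sum_range_succ]
  have hsum : ∑ j ∈ range (m + 1), (-1 : ℂ) ^ j * (‖c j‖ ^ 2 : ℝ)
      = (-1 : ℂ) ^ m * ((‖c (m + 1)‖ ^ 2 : ℝ) : ℂ) := by
    have := hfact.symm.trans hSm
    calc ∑ j ∈ range (m + 1), (-1 : ℂ) ^ j * (‖c j‖ ^ 2 : ℝ)
        = ((-1 : ℂ) ^ m * (-1 : ℂ) ^ m) * ∑ j ∈ range (m + 1), (-1 : ℂ) ^ j * (‖c j‖ ^ 2 : ℝ) := by
          rw [hm1, one_mul]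
      _ = (-1 : ℂ) ^ m * ((‖c (m + 1)‖ ^ 2 : ℝ) : ℂ) := by
          rw [mul_assoc, this]
  rw [hsum, pow_succ]
  ring
end

section
/- Let N, K, l be natural numbers with K ≥ 1, 1 ≤ l ≤ N − 1, and let c : {0,…,K} → ℂ with c_k ≠ 0 for all k. For m ∈ {0,…,l} set P_m(k) = ∏_{i=0}^{m−1} (kN − i) (so P_0(k) = 1), and assume Σ_{k=0}^{K} (−1)^k P_m(k) |c_k|² = 0 for every m ∈ {0,…,l}. Define H ∈ M_{KN+1}(ℂ) (rows and columns indexed 0,…,KN) by: H_{kN,(k+1)N} = (Σ_{j=0}^{k} (−1)^{j+k} |c_j|²) / (conj(c_k) c_{k+1}) for 0 ≤ k ≤ K−1; for 1 ≤ m ≤ l and 1 ≤ k ≤ K−1, H_{kN−m,(k+1)N−m} = (Σ_{j=1}^{k} (−1)^{j+k} P_m(j) |c_j|²) / (√(P_m(k) P_m(k+1)) · conj(c_k) c_{k+1}); H_{q,p} = conj(H_{p,q}) for these entries; and all other entries zero. Then: (i) H is Hermitian with nonzero entries only at positions (p,q) with |p − q| = N; (ii) H v_σ = σ v_σ for σ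 ∈ {+1,−1}, where v_σ = Σ_{k=0}^{K} σ^k c_k e_{kN}; and (iii) (H A^m − A^m H) v_σ = 0 for every 1 ≤ m ≤ l and both σ ∈ {+1,−1}. -/
open Finset

def clampIdx (n t : ℕ) : Fin (n+1) := ⟨min t n, by omega⟩

lemma clampIdx_coe {n t : ℕ} (h : t ≤ n) : ((clampIdx n t) : ℕ) = t := by
  simp [clampIdx, min_eq_left h]

lemma eq_clampIdx {n t : ℕ} (h : t ≤ n) (p : Fin (n+1)) (hp : (p:ℕ) = t) :
    p = clampIdx n t := Fin.ext (by rw [hp, clampIdx_coe h])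

lemma mySumCollapse {n : ℕ} (g : Fin (n+1) → ℂ) {t : ℕ} (ht : t ≤ n) (x : ℂ) :
    ∑ q : Fin (n+1), g q * (if (q:ℕ) = t then x else 0) = g (clampIdx n t) * x := by
  rw [Finset.sum_eq_single (clampIdx n t)]
  · rw [if_pos (clampIdx_coe ht)]
  · intro q _ hq
    rw [if_neg, mul_zero]
    intro h; exact hq (eq_clampIdx ht q h)
  · simp

lemma mySumCollapseZero {n : ℕ} (g : Fin (n+1) → ℂ) {t : ℕ} (ht : ¬ t ≤ n) (x : ℂ) :
    ∑ q : Fin (n+1), g q * (if (q:ℕ) = t then x else 0) = 0 := by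
  apply Finset.sum_eq_zero
  intro q _
  rw [if_neg, mul_zero]
  omega

lemma grid_ne {N m a b : ℕ} (hm1 : 1 ≤ m) (hmN : m < N) :
    a * N ≠ (b + 1) * N - m := by
  intro h
  rcases le_or_gt a b with hab | hab
  · have h1 : a*N ≤ b*N := Nat.mul_le_mul_right N hab
    have h2 : (b+1)*N = b*N + N := by ring
    omega
  · have h1 : (b+1)*N ≤ a*N := Nat.mul_le_mul_right N hab
    have h2 : (b+1)*N = b*N + N := by ring
    omega

lemma grid_eq {N m m' a b : ℕ} (hm1 : 1 ≤ m) (hmN : m < N) (hm'1 : 1 ≤ m') (hm'N : m' < N)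
    (ha : 1 ≤ a) (hb : 1 ≤ b) (h : a * N - m = b * N - m') : m = m' ∧ a = b := by
  have haN : N ≤ a*N := Nat.le_mul_of_pos_left N (by omega)
  have hbN : N ≤ b*N := Nat.le_mul_of_pos_left N (by omega)
  have h' : a*N + m' = b*N + m := by
    have hma : m ≤ a*N := by omega
    have hmb : m' ≤ b*N := by omega
    omega
  rcases Nat.lt_trichotomy a b with hab | hab | hab
  · have h1 : a*N + N ≤ b*N := by
      have h3 := Nat.mul_le_mul_right N (show a+1 ≤ b by omega)
      have h2 : (a+1)*N = a*N + N := by ring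
      omega
    omega
  · subst hab; omega
  · have h1 : b*N + N ≤ a*N := by
      have h3 := Nat.mul_le_mul_right N (show b+1 ≤ a by omega)
      have h2 : (b+1)*N = b*N + N := by ring
      omega
    omega

lemma sum_twoG {s : Finset ℕ} (f : ℕ → ℂ) {a b : ℕ} (ha : a ∈ s) (hb : b ∈ s)
    (hab : a ≠ b) (h0 : ∀ k ∈ s, k ≠ a → k ≠ b → f k = 0) :
    ∑ k ∈ s, f k = f a + f b := by
  have hsub : ({a, b} : Finset ℕ) ⊆ s := by
    intro x hx
    simp only [Finset.mem_insert, Finset.mem_singleton] at hx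
    rcases hx with rfl | rfl <;> assumption
  rw [← Finset.sum_subset hsub]
  · exact Finset.sum_pair hab
  · intro x hx hnx
    simp only [Finset.mem_insert, Finset.mem_singleton, not_or] at hnx
    exact h0 x hx hnx.1 hnx.2

lemma altStepRange (g : ℕ → ℝ) (k : ℕ) :
    (∑ j ∈ range (k+2), (-1:ℝ)^(j+(k+1)) * g j)
      + (∑ j ∈ range (k+1), (-1:ℝ)^(j+k) * g j) = g (k+1) := by
  rw [Finset.sum_range_succ]
  have h2 : ((-1:ℝ))^((k+1)+(k+1)) = 1 := Even.neg_one_pow ⟨k+1, by omega⟩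
  have h3 : ∑ j ∈ range (k+1), (-1:ℝ)^(j+(k+1)) * g j
      = -∑ j ∈ range (k+1), (-1:ℝ)^(j+k) * g j := by
    rw [← Finset.sum_neg_distrib]
    refine Finset.sum_congr rfl fun j _ => ?_
    rw [show j+(k+1) = (j+k)+1 by omega, pow_succ]; ring
  rw [h3, h2]; ring

lemma altStepIcc (g : ℕ → ℝ) (k : ℕ) :
    (∑ j ∈ Icc 1 (k+1), (-1:ℝ)^(j+(k+1)) * g j)
      + (∑ j ∈ Icc 1 k, (-1:ℝ)^(j+k) * g j) = g (k+1) := by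
  rw [Finset.sum_Icc_succ_top (by omega : 1 ≤ k+1)]
  have h2 : ((-1:ℝ))^((k+1)+(k+1)) = 1 := Even.neg_one_pow ⟨k+1, by omega⟩
  have h3 : ∑ j ∈ Icc 1 k, (-1:ℝ)^(j+(k+1)) * g j
      = -∑ j ∈ Icc 1 k, (-1:ℝ)^(j+k) * g j := by
    rw [← Finset.sum_neg_distrib]
    refine Finset.sum_congr rfl fun j _ => ?_
    rw [show j+(k+1) = (j+k)+1 by omega, pow_succ]; ring
  rw [h3, h2]; ring

lemma altEnd (g : ℕ → ℝ) (K' : ℕ) (h : ∑ k ∈ range (K'+2), (-1:ℝ)^k * g k = 0) :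
    ∑ j ∈ range (K'+1), (-1:ℝ)^(j+K') * g j = g (K'+1) := by
  rw [Finset.sum_range_succ] at h
  have e : ∑ j ∈ range (K'+1), (-1:ℝ)^(j+K') * g j
      = (-1:ℝ)^K' * ∑ k ∈ range (K'+1), (-1:ℝ)^k * g k := by
    rw [Finset.mul_sum]
    refine Finset.sum_congr rfl fun j _ => ?_
    rw [pow_add]; ring
  have ht : (-1:ℝ)^K' * (-1:ℝ)^K' = 1 := by
    rw [← pow_add]; exact Even.neg_one_pow ⟨K', rfl⟩
  rw [e]
  rw [pow_succ] at h
  linear_combination ((-1:ℝ)^K') * h + g (K'+1) * ht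

lemma altEndIcc (g : ℕ → ℝ) (K' : ℕ) (hg0 : g 0 = 0)
    (h : ∑ k ∈ range (K'+2), (-1:ℝ)^k * g k = 0) :
    ∑ j ∈ Icc 1 K', (-1:ℝ)^(j+K') * g j = g (K'+1) := by
  have h1 := altEnd g K' h
  rw [Finset.sum_range_succ'] at h1
  simp only [hg0, mul_zero, add_zero] at h1
  rw [← h1, show Icc 1 K' = Ico 1 (K'+1) by rw [Finset.Ico_add_one_right_eq_Icc],
    Finset.sum_Ico_eq_sum_range]
  simp only [Nat.add_sub_cancel]
  refine Finset.sum_congr rfl fun j _ => ?_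
  rw [show 1 + j = j + 1 by omega]

lemma myMulVecSmul {n : ℕ} (M : Matrix (Fin n) (Fin n) ℂ) (b : ℂ) (x : Fin n → ℂ) :
    M.mulVec (b • x) = b • M.mulVec x := by
  funext p
  simp only [Matrix.mulVec, dotProduct, Pi.smul_apply, smul_eq_mul, Finset.mul_sum]
  refine Finset.sum_congr rfl fun q _ => by ring

noncomputable def Ssum (c : ℕ → ℂ) (k : ℕ) : ℝ := ∑ j ∈ range (k+1), (-1:ℝ)^(j+k) * ‖c j‖^2

noncomputable def Tsum (c : ℕ → ℂ) (P : ℕ → ℕ → ℝ) (m k : ℕ) : ℝ :=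
  ∑ j ∈ Icc 1 k, (-1:ℝ)^(j+k) * P m j * ‖c j‖^2

lemma Ssum_cast (c : ℕ → ℂ) (k : ℕ) :
    (∑ j ∈ range (k+1), (-1:ℂ)^(j+k) * ((‖c j‖^2 : ℝ) : ℂ)) = ((Ssum c k : ℝ) : ℂ) := by
  unfold Ssum; push_cast; rfl

lemma Tsum_cast (c : ℕ → ℂ) (P : ℕ → ℕ → ℝ) (m k : ℕ) :
    (∑ j ∈ Icc 1 k, (-1:ℂ)^(j+k) * ((P m j : ℝ) : ℂ) * ((‖c j‖^2 : ℝ) : ℂ))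
      = ((Tsum c P m k : ℝ) : ℂ) := by
  unfold Tsum; push_cast; rfl

lemma Ssum_step (c : ℕ → ℂ) (k : ℕ) : Ssum c (k+1) + Ssum c k = ‖c (k+1)‖^2 := by
  unfold Ssum
  exact altStepRange (fun j => ‖c j‖^2) k

lemma Tsum_eq (c : ℕ → ℂ) (P : ℕ → ℕ → ℝ) (m k : ℕ) :
    Tsum c P m k = ∑ j ∈ Icc 1 k, (-1:ℝ)^(j+k) * (P m j * ‖c j‖^2) := by
  unfold Tsum
  exact Finset.sum_congr rfl fun j _ => by ring

lemma Tsum_step (c : ℕ → ℂ) (P : ℕ → ℕ → ℝ) (m k : ℕ) :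
    Tsum c P m (k+1) + Tsum c P m k = P m (k+1) * ‖c (k+1)‖^2 := by
  rw [Tsum_eq, Tsum_eq]
  exact altStepIcc (fun j => P m j * ‖c j‖^2) k

lemma Tsum_zero (c : ℕ → ℂ) (P : ℕ → ℕ → ℝ) (m : ℕ) : Tsum c P m 0 = 0 := by
  unfold Tsum; simp

lemma sqrtMulSelf (x : ℝ) (hx : 0 ≤ x) :
    ((Real.sqrt x : ℝ):ℂ) * ((Real.sqrt x : ℝ):ℂ) = ((x:ℝ):ℂ) := by
  rw [← Complex.ofReal_mul, Real.mul_self_sqrt hx]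






/-- Theorem 2 of the paper: the explicit parity-nested
single-squeezing Hamiltonian.  Work in the truncated Fock space `ℂ^{KN+1}`
with lowering matrix `A e_n = √n e_{n−1}`.  Given Fock-grid coefficients
`c₀,…,c_K` (all nonzero) satisfying the jump-error Knill–Laflamme moment
conditions `∑_k (−1)^k P_m(k) |c_k|² = 0` for `0 ≤ m ≤ l`, where
`P_m(k) = ∏_{i<m} (kN − i)`, the matrix `H` whose only (upper) entries are
`H_{kN,(k+1)N} = (∑_{j≤k} (−1)^{j+k}|c_j|²)/(conj(c_k)c_{k+1})` and, for
`1 ≤ m ≤ l`, `H_{kN−m,(k+1)N−m} = (∑_{j=1}^{k} (−1)^{j+k}P_m(j)|c_j|²)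
/(√(P_m(k)P_m(k+1))·conj(c_k)c_{k+1})`, is (i) Hermitian with support on the
`N`-th off-diagonals, (ii) satisfies `H v_σ = σ v_σ` for the dual codewords
`v_σ = ∑_k σ^k c_k e_{kN}` (`σ = ±1`), and (iii) is error-transparent to the
photon jumps: `(H A^m − A^m H) v_σ = 0` for `1 ≤ m ≤ l`. -/
theorem stmt_2 (N K l : ℕ) (hK : 1 ≤ K) (hl1 : 1 ≤ l) (hlN : (l : ℤ) ≤ (N : ℤ) - 1)
    (c : ℕ → ℂ) (hc : ∀ k ≤ K, c k ≠ 0)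
    (P : ℕ → ℕ → ℝ)
    (hP : ∀ m k, P m k = ∏ i ∈ range m, ((k * N : ℝ) - (i : ℝ)))
    (hmom : ∀ m ≤ l, ∑ k ∈ range (K + 1), (-1 : ℝ) ^ k * P m k * ‖c k‖ ^ 2 = 0)
    (H : Matrix (Fin (K * N + 1)) (Fin (K * N + 1)) ℂ)
    (hH0 : ∀ k, (hk : k < K) →
      H ⟨k * N, by have := Nat.mul_le_mul (Nat.le_of_lt hk) (le_refl N); omega⟩
        ⟨(k + 1) * N, by have := Nat.mul_le_mul (show k + 1 ≤ K by omega) (le_refl N); omega⟩ =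
        (∑ j ∈ range (k + 1), (-1 : ℂ) ^ (j + k) * (‖c j‖ ^ 2 : ℝ)) /
          ((starRingEnd ℂ) (c k) * c (k + 1)))
    (hHm : ∀ m, 1 ≤ m → m ≤ l → ∀ k, (hk1 : 1 ≤ k) → (hk : k + 1 ≤ K) →
      H ⟨k * N - m, by have := Nat.mul_le_mul (by omega : k ≤ K) (le_refl N); omega⟩
        ⟨(k + 1) * N - m, by have := Nat.mul_le_mul hk (le_refl N); omega⟩ =
        (∑ j ∈ Icc 1 k, (-1 : ℂ) ^ (j + k) * (P m j : ℝ) * (‖c j‖ ^ 2 : ℝ)) /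
          ((Real.sqrt (P m k * P m (k + 1)) : ℂ) * ((starRingEnd ℂ) (c k) * c (k + 1))))
    (hsym : ∀ p q : Fin (K * N + 1), H q p = (starRingEnd ℂ) (H p q))
    (hzero : ∀ p q : Fin (K * N + 1),
      ¬((∃ k, k < K ∧ (p : ℕ) = k * N ∧ (q : ℕ) = (k + 1) * N) ∨
        (∃ m k, 1 ≤ m ∧ m ≤ l ∧ 1 ≤ k ∧ k + 1 ≤ K ∧
          (p : ℕ) = k * N - m ∧ (q : ℕ) = (k + 1) * N - m)) →
      ¬((∃ k, k < K ∧ (q : ℕ) = k * N ∧ (p : ℕ) = (k + 1) * N) ∨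
        (∃ m k, 1 ≤ m ∧ m ≤ l ∧ 1 ≤ k ∧ k + 1 ≤ K ∧
          (q : ℕ) = k * N - m ∧ (p : ℕ) = (k + 1) * N - m)) →
      H p q = 0)
    (A : Matrix (Fin (K * N + 1)) (Fin (K * N + 1)) ℂ)
    (hA : ∀ p q : Fin (K * N + 1),
      A p q = if (p : ℕ) + 1 = (q : ℕ) then (Real.sqrt (q : ℕ) : ℂ) else 0)
    (v : ℂ → Fin (K * N + 1) → ℂ)
    (hv : ∀ (σ : ℂ) (n : Fin (K * N + 1)),
      v σ n = ∑ k ∈ range (K + 1), if (n : ℕ) = k * N then σ ^ k * c k else 0) :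
    (H.IsHermitian ∧
      ∀ p q : Fin (K * N + 1), H p q ≠ 0 →
        ((p : ℕ) + N = (q : ℕ) ∨ (q : ℕ) + N = (p : ℕ))) ∧
    (∀ σ : ℂ, (σ = 1 ∨ σ = -1) → H.mulVec (v σ) = σ • v σ) ∧
    (∀ m, 1 ≤ m → m ≤ l → ∀ σ : ℂ, (σ = 1 ∨ σ = -1) →
      (H * A ^ m - A ^ m * H).mulVec (v σ) = 0) := by
  
  have hN : l + 1 ≤ N := by omega
  have hNpos : 0 < N := by omega
  have kNle : ∀ k, k ≤ K → k * N ≤ K * N := fun k hk => Nat.mul_le_mul_right N hk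
  have hPpos : ∀ m, m ≤ l → ∀ k, 1 ≤ k → 0 < P m k := by
    intro m hm k hk
    rw [hP]
    apply Finset.prod_pos
    intro i hi
    rw [Finset.mem_range] at hi
    have h1 : N ≤ k*N := Nat.le_mul_of_pos_left N (by omega)
    have h2 : i < N := by omega
    have h3 : (i:ℝ) < ((k*N : ℕ) : ℝ) := by exact_mod_cast lt_of_lt_of_le h2 h1
    push_cast at h3 ⊢
    linarith
  have hP0 : ∀ m, 1 ≤ m → P m 0 = 0 := by
    intro m hm
    rw [hP]
    apply Finset.prod_eq_zero (Finset.mem_range.mpr (show 0 < m by omega))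
    norm_num
  have hP00 : ∀ k, P 0 k = 1 := fun k => by rw [hP]; simp
  have hK2 : 2 ≤ K := by
    by_contra hcon
    have hK1 : K = 1 := by omega
    have h := hmom l le_rfl
    rw [hK1] at h
    rw [Finset.sum_range_succ, Finset.sum_range_one] at h
    rw [hP0 l hl1] at h
    have h1 : 0 < P l 1 := hPpos l le_rfl 1 le_rfl
    have h2 : c 1 ≠ 0 := hc 1 (by omega)
    have h3 : 0 < ‖c 1‖^2 := by
      have := norm_pos_iff.mpr h2
      positivity
    norm_num at h
    rcases h with h | h
    · exact absurd h h1.ne'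
    · exact h2 h
  obtain ⟨K', rfl⟩ : ∃ K', K = K'+1 := ⟨K-1, by omega⟩
  have hK'1 : 1 ≤ K' := by omega
  -- nonzero facts
  have hconj_ne : ∀ k, k ≤ K'+1 → (starRingEnd ℂ) (c k) ≠ 0 := by
    intro k hk
    simp only [ne_eq, map_eq_zero]
    exact hc k hk
  -- pattern extraction
  have hpat : ∀ p q : Fin ((K'+1) * N + 1), H p q ≠ 0 →
      ((∃ k, k < K'+1 ∧ (p : ℕ) = k * N ∧ (q : ℕ) = (k + 1) * N) ∨
        (∃ m k, 1 ≤ m ∧ m ≤ l ∧ 1 ≤ k ∧ k + 1 ≤ K'+1 ∧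
          (p : ℕ) = k * N - m ∧ (q : ℕ) = (k + 1) * N - m)) ∨
      ((∃ k, k < K'+1 ∧ (q : ℕ) = k * N ∧ (p : ℕ) = (k + 1) * N) ∨
        (∃ m k, 1 ≤ m ∧ m ≤ l ∧ 1 ≤ k ∧ k + 1 ≤ K'+1 ∧
          (q : ℕ) = k * N - m ∧ (p : ℕ) = (k + 1) * N - m)) := by
    intro p q hne
    by_contra hcon
    rw [not_or] at hcon
    exact hne (hzero p q hcon.1 hcon.2)
  -- column analysis for columns k*N
  have hcol0 : ∀ k, k ≤ K'+1 → ∀ p : Fin ((K'+1)*N+1),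
      H p (clampIdx ((K'+1)*N) (k*N)) ≠ 0 →
      (1 ≤ k ∧ (p:ℕ) = (k-1)*N) ∨ (k+1 ≤ K'+1 ∧ (p:ℕ) = (k+1)*N) := by
    intro k hk p hne
    have hqc : ((clampIdx ((K'+1)*N) (k*N)) : ℕ) = k*N := clampIdx_coe (kNle k hk)
    rcases hpat p _ hne with (⟨k', hk', hp, hq⟩ | ⟨m', k', hm'1, hm'l, hk'1, hk'K, hp, hq⟩) |
      (⟨k', hk', hq, hp⟩ | ⟨m', k', hm'1, hm'l, hk'1, hk'K, hq, hp⟩)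
    · rw [hqc] at hq
      have e : k = k'+1 := Nat.eq_of_mul_eq_mul_right hNpos hq
      left
      refine ⟨by omega, ?_⟩
      rw [show k-1 = k' by omega]; exact hp
    · rw [hqc] at hq
      exact absurd hq (grid_ne hm'1 (by omega))
    · rw [hqc] at hq
      have e : k' = k := Nat.eq_of_mul_eq_mul_right hNpos hq.symm
      right
      subst e
      exact ⟨by omega, hp⟩
    · rw [hqc] at hq
      rw [show k' = (k'-1)+1 by omega] at hq
      exact absurd hq (grid_ne hm'1 (by omega))
  -- column analysis for columns k*N - m
  have hcolm : ∀ m, 1 ≤ m → m ≤ l → ∀ k, 1 ≤ k → k ≤ K'+1 → ∀ p : Fin ((K'+1)*N+1),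
      H p (clampIdx ((K'+1)*N) (k*N - m)) ≠ 0 →
      (2 ≤ k ∧ (p:ℕ) = (k-1)*N - m) ∨ (k+1 ≤ K'+1 ∧ (p:ℕ) = (k+1)*N - m) := by
    intro m hm1 hml k hk1 hkK p hne
    have hqc : ((clampIdx ((K'+1)*N) (k*N - m)) : ℕ) = k*N - m := by
      apply clampIdx_coe
      have := kNle k hkK
      omega
    rcases hpat p _ hne with (⟨k', hk', hp, hq⟩ | ⟨m', k', hm'1, hm'l, hk'1, hk'K, hp, hq⟩) |
      (⟨k', hk', hq, hp⟩ | ⟨m', k', hm'1, hm'l, hk'1, hk'K, hq, hp⟩)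
    · rw [hqc] at hq
      rw [show k = (k-1)+1 by omega] at hq
      exact absurd hq.symm (grid_ne hm1 (by omega))
    · rw [hqc] at hq
      obtain ⟨e1, e2⟩ := grid_eq hm1 (by omega) hm'1 (by omega) hk1 (by omega) hq
      left
      refine ⟨by omega, ?_⟩
      rw [hp, show k-1 = k' by omega, e1]
    · rw [hqc] at hq
      rw [show k = (k-1)+1 by omega] at hq
      exact absurd hq.symm (grid_ne hm1 (by omega))
    · rw [hqc] at hq
      obtain ⟨e1, e2⟩ := grid_eq hm1 (by omega) hm'1 (by omega) hk1 hk'1 hq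
      right
      refine ⟨by omega, ?_⟩
      rw [hp, show k+1 = k'+1 by omega, e1]
  -- entry values
  have Eup0 : ∀ k, k < K'+1 → H (clampIdx ((K'+1)*N) (k*N)) (clampIdx ((K'+1)*N) ((k+1)*N))
      = ((Ssum c k : ℝ) : ℂ) / ((starRingEnd ℂ) (c k) * c (k+1)) := by
    intro k hk
    rw [show clampIdx ((K'+1)*N) (k*N)
          = (⟨k*N, by have := kNle k hk.le; omega⟩ : Fin ((K'+1)*N+1)) from
        Fin.ext (clampIdx_coe (kNle k hk.le)),
      show clampIdx ((K'+1)*N) ((k+1)*N)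
          = (⟨(k+1)*N, by have := kNle (k+1) hk; omega⟩ : Fin ((K'+1)*N+1)) from
        Fin.ext (clampIdx_coe (kNle (k+1) hk))]
    rw [hH0 k hk, Ssum_cast]
  have Eupm : ∀ m, 1 ≤ m → m ≤ l → ∀ k, 1 ≤ k → k+1 ≤ K'+1 →
      H (clampIdx ((K'+1)*N) (k*N - m)) (clampIdx ((K'+1)*N) ((k+1)*N - m))
      = ((Tsum c P m k : ℝ) : ℂ) /
          (((Real.sqrt (P m k * P m (k+1)) : ℝ) : ℂ) * ((starRingEnd ℂ) (c k) * c (k+1))) := by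
    intro m hm1 hml k hk1 hkK
    rw [show clampIdx ((K'+1)*N) (k*N - m)
          = (⟨k*N - m, by have := kNle k (by omega); omega⟩ : Fin ((K'+1)*N+1)) from
        Fin.ext (clampIdx_coe (by have := kNle k (by omega); omega)),
      show clampIdx ((K'+1)*N) ((k+1)*N - m)
          = (⟨(k+1)*N - m, by have := kNle (k+1) hkK; omega⟩ : Fin ((K'+1)*N+1)) from
        Fin.ext (clampIdx_coe (by have := kNle (k+1) hkK; omega))]
    rw [hHm m hm1 hml k hk1 hkK, Tsum_cast]
  -- Part (i)
  have hHermit : H.IsHermitian := by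
    unfold Matrix.IsHermitian
    ext p q
    rw [Matrix.conjTranspose_apply]
    exact (hsym q p).symm
  have hsupp : ∀ p q : Fin ((K'+1)*N+1), H p q ≠ 0 →
      ((p:ℕ) + N = (q:ℕ) ∨ (q:ℕ) + N = (p:ℕ)) := by
    intro p q hne
    rcases hpat p q hne with (⟨k, hk, hp, hq⟩ | ⟨m, k, hm1, hml, hk1, hkK, hp, hq⟩) |
      (⟨k, hk, hq, hp⟩ | ⟨m, k, hm1, hml, hk1, hkK, hq, hp⟩)
    · left; have e : (k+1)*N = k*N + N := by ring
      omega
    · left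
      have e : (k+1)*N = k*N + N := by ring
      have h1 : N ≤ k*N := Nat.le_mul_of_pos_left N (by omega)
      omega
    · right; have e : (k+1)*N = k*N + N := by ring
      omega
    · right
      have e : (k+1)*N = k*N + N := by ring
      have h1 : N ≤ k*N := Nat.le_mul_of_pos_left N (by omega)
      omega
  -- Part (ii)
  have hmain2 : ∀ σ : ℂ, (σ = 1 ∨ σ = -1) → H.mulVec (v σ) = σ • v σ := by
    intro σ hσ
    have hσ2 : σ * σ = 1 := by rcases hσ with h|h <;> rw [h] <;> ring
    have epow : ∀ t : ℕ, σ^(t+1+1) = σ^t := by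
      intro t; rw [pow_succ, pow_succ, mul_assoc, hσ2, mul_one]
    funext p
    have hLHS : H.mulVec (v σ) p
        = ∑ k ∈ range (K'+1+1), H p (clampIdx ((K'+1)*N) (k*N)) * (σ^k * c k) := by
      rw [Matrix.mulVec, dotProduct]
      calc (∑ q : Fin ((K'+1)*N+1), H p q * v σ q)
          = ∑ q : Fin ((K'+1)*N+1), ∑ k ∈ range (K'+1+1),
              H p q * (if (q:ℕ) = k*N then σ^k * c k else 0) := by
            refine Finset.sum_congr rfl fun q _ => ?_
            rw [hv, Finset.mul_sum]
        _ = ∑ k ∈ range (K'+1+1), ∑ q : Fin ((K'+1)*N+1),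
              H p q * (if (q:ℕ) = k*N then σ^k * c k else 0) := Finset.sum_comm
        _ = _ := by
            refine Finset.sum_congr rfl fun k hk => ?_
            rw [Finset.mem_range] at hk
            exact mySumCollapse _ (kNle k (by omega)) _
    rw [hLHS, Pi.smul_apply, smul_eq_mul, hv σ p]
    by_cases hex : ∃ j, j ≤ K'+1 ∧ (p:ℕ) = j*N
    · obtain ⟨j, hjK, hpj⟩ := hex
      have hRHS : (∑ k ∈ range (K'+1+1), if (p:ℕ) = k*N then σ^k * c k else 0)
          = σ^j * c j := by
        rw [Finset.sum_eq_single_of_mem j (Finset.mem_range.mpr (by omega))]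
        · rw [if_pos hpj]
        · intro k hk hkj
          rw [if_neg]
          rw [hpj]
          intro hcon
          exact hkj (Nat.eq_of_mul_eq_mul_right hNpos hcon).symm
      rw [hRHS]
      have hpc : p = clampIdx ((K'+1)*N) (j*N) := eq_clampIdx (kNle j hjK) p hpj
      subst hpc
      have hrowz : ∀ k, k ≤ K'+1 → k ≠ j+1 → j ≠ k+1 →
          H (clampIdx ((K'+1)*N) (j*N)) (clampIdx ((K'+1)*N) (k*N)) * (σ^k * c k) = 0 := by
        intro k hk h1 h2
        rcases eq_or_ne (H (clampIdx ((K'+1)*N) (j*N)) (clampIdx ((K'+1)*N) (k*N))) 0 with h|h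
        · rw [h, zero_mul]
        · exfalso
          rcases hcol0 k hk _ h with ⟨hk1, hpc⟩ | ⟨hk1, hpc⟩
          · rw [clampIdx_coe (kNle j hjK)] at hpc
            have := Nat.eq_of_mul_eq_mul_right hNpos hpc
            exact h1 (by omega)
          · rw [clampIdx_coe (kNle j hjK)] at hpc
            have := Nat.eq_of_mul_eq_mul_right hNpos hpc
            exact h2 (by omega)
      rcases Nat.eq_zero_or_pos j with hj0 | hj1
      · subst hj0
        rw [Finset.sum_eq_single_of_mem (0+1) (Finset.mem_range.mpr (by omega))
            (fun b hb hbne => hrowz b (by rw [Finset.mem_range] at hb; omega)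
              (by omega) (by omega))]
        rw [Eup0 0 (by omega)]
        have hS0 : Ssum c 0 = ‖c 0‖^2 := by simp [Ssum]
        rw [hS0]
        have hcc : ((‖c 0‖^2 : ℝ) : ℂ) = c 0 * (starRingEnd ℂ) (c 0) := by
          push_cast
          exact (Complex.mul_conj' _).symm
        rw [hcc]
        have h1 := hc 0 (by omega)
        have h2 := hc (0+1) (by omega)
        have h3 := hconj_ne 0 (by omega)
        field_simp
        ring
      · obtain ⟨j', rfl⟩ : ∃ j', j = j'+1 := ⟨j-1, by omega⟩
        by_cases hjtop : j' = K'
        · subst hjtop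
          rw [Finset.sum_eq_single_of_mem j' (Finset.mem_range.mpr (by omega))
              (fun b hb hbne => hrowz b (by rw [Finset.mem_range] at hb; omega)
                (by rw [Finset.mem_range] at hb; omega) (by omega))]
          rw [hsym (clampIdx ((j'+1)*N) (j'*N)) (clampIdx ((j'+1)*N) ((j'+1)*N))]
          rw [Eup0 j' (by omega)]
          rw [map_div₀, map_mul, Complex.conj_conj, Complex.conj_ofReal]
          have hmom0 : ∑ k ∈ range (j'+1+1), (-1:ℝ)^k * ‖c k‖^2 = 0 := by
            have h := hmom 0 (by omega)
            rw [← h]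
            refine Finset.sum_congr rfl fun k _ => ?_
            rw [hP00, mul_one]
          have hend0 : Ssum c j' = ‖c (j'+1)‖^2 := altEnd (fun j => ‖c j‖^2) j' hmom0
          rw [hend0]
          have hcc : ((‖c (j'+1)‖^2 : ℝ):ℂ) = c (j'+1) * (starRingEnd ℂ) (c (j'+1)) := by
            push_cast
            exact (Complex.mul_conj' _).symm
          rw [hcc]
          rw [show σ * (σ^(j'+1) * c (j'+1)) = σ^j' * ((σ * σ) * c (j'+1)) from by ring,
            hσ2, one_mul]
          have h1 := hc j' (by omega)
          have h2 := hc (j'+1) (by omega)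
          have h3 := hconj_ne (j'+1) (by omega)
          field_simp
        · have hjK' : j'+1 ≤ K' := by omega
          rw [sum_twoG _ (Finset.mem_range.mpr (show j' < K'+1+1 by omega))
              (Finset.mem_range.mpr (show j'+1+1 < K'+1+1 by omega)) (by omega)
              (fun b hb h1 h2 => hrowz b (by rw [Finset.mem_range] at hb; omega)
                (by omega) (by omega))]
          rw [hsym (clampIdx ((K'+1)*N) (j'*N)) (clampIdx ((K'+1)*N) ((j'+1)*N))]
          rw [Eup0 j' (by omega), Eup0 (j'+1) (by omega)]
          rw [map_div₀, map_mul, Complex.conj_conj, Complex.conj_ofReal]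
          have hstepC : ((Ssum c (j'+1) : ℝ):ℂ)
              = c (j'+1) * (starRingEnd ℂ) (c (j'+1)) - ((Ssum c j' : ℝ):ℂ) := by
            have h := Ssum_step c j'
            have h2 : Ssum c (j'+1) = ‖c (j'+1)‖^2 - Ssum c j' := by linarith
            rw [h2]
            push_cast
            rw [Complex.mul_conj']
          rw [hstepC]
          rw [epow j']
          rw [show σ * (σ^(j'+1) * c (j'+1)) = σ^j' * ((σ*σ) * c (j'+1)) from by ring,
            hσ2, one_mul]
          have h1 := hc j' (by omega)
          have h2 := hc (j'+1) (by omega)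
          have h3 := hc (j'+1+1) (by omega)
          have h4 := hconj_ne (j'+1) (by omega)
          field_simp
          ring
    · have hR : (∑ k ∈ range (K'+1+1), if (p:ℕ) = k*N then σ^k * c k else 0) = 0 := by
        apply Finset.sum_eq_zero
        intro k hk
        rw [Finset.mem_range] at hk
        rw [if_neg]
        intro hcon
        exact hex ⟨k, by omega, hcon⟩
      have hL : (∑ k ∈ range (K'+1+1), H p (clampIdx ((K'+1)*N) (k*N)) * (σ^k * c k)) = 0 := by
        apply Finset.sum_eq_zero
        intro k hk
        rw [Finset.mem_range] at hk
        rcases eq_or_ne (H p (clampIdx ((K'+1)*N) (k*N))) 0 with h|h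
        · rw [h, zero_mul]
        · exfalso
          rcases hcol0 k (by omega) p h with ⟨hk1, hpc⟩ | ⟨hk1, hpc⟩
          · exact hex ⟨k-1, by omega, hpc⟩
          · exact hex ⟨k+1, by omega, hpc⟩
      rw [hL, hR, mul_zero]
  -- action of A^m on the codewords
  have hw : ∀ m, m ≤ l → ∀ σ : ℂ, ∀ p : Fin ((K'+1)*N+1), (A^m).mulVec (v σ) p
      = ∑ k ∈ range (K'+1+1),
          if (p:ℕ) + m = k*N then ((Real.sqrt (P m k) : ℝ) : ℂ) * (σ^k * c k) else 0 := by
    intro m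
    induction m with
    | zero =>
      intro _ σ p
      rw [pow_zero, Matrix.one_mulVec, hv]
      refine Finset.sum_congr rfl fun k hk => ?_
      rw [hP00 k]
      simp [Real.sqrt_one]
    | succ m ih =>
      intro hml σ p
      have ihm := ih (by omega) σ
      rw [pow_succ', ← Matrix.mulVec_mulVec]
      rw [Matrix.mulVec, dotProduct]
      have step1 : ∀ q : Fin ((K'+1)*N+1), A p q * (A^m).mulVec (v σ) q
          = (A^m).mulVec (v σ) q *
            (if (q:ℕ) = (p:ℕ)+1 then ((Real.sqrt (((p:ℕ)+1 : ℕ)) : ℝ):ℂ) else 0) := by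
        intro q
        rw [hA]
        by_cases h : (p:ℕ)+1 = (q:ℕ)
        · rw [if_pos h, if_pos h.symm, ← h]
          ring
        · rw [if_neg h, if_neg (fun hh => h hh.symm)]
          ring
      rw [Finset.sum_congr rfl (fun q _ => step1 q)]
      by_cases hple : (p:ℕ)+1 ≤ (K'+1)*N
      · rw [mySumCollapse _ hple _]
        rw [ihm (clampIdx ((K'+1)*N) ((p:ℕ)+1))]
        rw [clampIdx_coe hple]
        rw [Finset.sum_mul]
        refine Finset.sum_congr rfl fun k hk => ?_
        rw [Finset.mem_range] at hk
        by_cases hcond : (p:ℕ)+1+m = k*N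
        · rw [if_pos hcond, if_pos (show (p:ℕ)+(m+1) = k*N by omega)]
          have hk1 : 1 ≤ k := by
            rcases Nat.eq_zero_or_pos k with h0|h1
            · exfalso; subst h0; simp only [Nat.zero_mul] at hcond; omega
            · exact h1
          have hreal : (((p:ℕ)+1 : ℕ) : ℝ) = (k:ℝ)*(N:ℝ) - (m:ℝ) := by
            have h2 : (((p:ℕ)+1+m : ℕ) : ℝ) = ((k*N : ℕ) : ℝ) := by exact_mod_cast congrArg (Nat.cast (R := ℝ)) hcond
            push_cast at h2 ⊢
            linarith
          have hPm1 : P (m+1) k = P m k * ((k:ℝ)*(N:ℝ) - (m:ℝ)) := by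
            rw [hP, hP, Finset.prod_range_succ]
          have hfin : Real.sqrt (P (m+1) k)
              = Real.sqrt (P m k) * Real.sqrt (((p:ℕ)+1 : ℕ) : ℝ) := by
            rw [hPm1, Real.sqrt_mul (hPpos m (by omega) k hk1).le]
            rw [hreal]
          rw [hfin]
          push_cast
          ring
        · rw [if_neg hcond, if_neg (show ¬((p:ℕ)+(m+1) = k*N) by omega), zero_mul]
      · rw [mySumCollapseZero _ hple _]
        symm
        apply Finset.sum_eq_zero
        intro k hk
        rw [Finset.mem_range] at hk
        rw [if_neg]
        have hkN := kNle k (by omega)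
        omega
  -- Part (iii)
  have hmain3 : ∀ m, 1 ≤ m → m ≤ l → ∀ σ : ℂ, (σ = 1 ∨ σ = -1) →
      (H * A ^ m - A ^ m * H).mulVec (v σ) = 0 := by
    intro m hm1 hml σ hσ
    have hσ2 : σ * σ = 1 := by rcases hσ with h|h <;> rw [h] <;> ring
    have epow : ∀ t : ℕ, σ^(t+1+1) = σ^t := by
      intro t; rw [pow_succ, pow_succ, mul_assoc, hσ2, mul_one]
    have hNm : m < N := by omega
    rw [Matrix.sub_mulVec, ← Matrix.mulVec_mulVec, ← Matrix.mulVec_mulVec,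
      hmain2 σ hσ, myMulVecSmul, sub_eq_zero]
    funext p
    have hLHS : H.mulVec ((A^m).mulVec (v σ)) p
        = ∑ k ∈ Icc 1 (K'+1), H p (clampIdx ((K'+1)*N) (k*N - m))
            * (((Real.sqrt (P m k) : ℝ):ℂ) * (σ^k * c k)) := by
      rw [Matrix.mulVec, dotProduct]
      calc (∑ q : Fin ((K'+1)*N+1), H p q * (A^m).mulVec (v σ) q)
          = ∑ q : Fin ((K'+1)*N+1), ∑ k ∈ range (K'+1+1),
              H p q * (if (q:ℕ) + m = k*N
                then ((Real.sqrt (P m k) : ℝ):ℂ) * (σ^k * c k) else 0) := by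
            refine Finset.sum_congr rfl fun q _ => ?_
            rw [hw m hml σ q, Finset.mul_sum]
        _ = ∑ k ∈ range (K'+1+1), ∑ q : Fin ((K'+1)*N+1),
              H p q * (if (q:ℕ) + m = k*N
                then ((Real.sqrt (P m k) : ℝ):ℂ) * (σ^k * c k) else 0) := Finset.sum_comm
        _ = ∑ k ∈ range (K'+1+1), (if 1 ≤ k then H p (clampIdx ((K'+1)*N) (k*N - m))
              * (((Real.sqrt (P m k) : ℝ):ℂ) * (σ^k * c k)) else 0) := by
            refine Finset.sum_congr rfl fun k hk => ?_
            rw [Finset.mem_range] at hk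
            by_cases hk1 : 1 ≤ k
            · rw [if_pos hk1]
              have hmkN : m ≤ k*N := by
                have := Nat.le_mul_of_pos_left N (show 0 < k by omega)
                omega
              have hcongr : ∀ q : Fin ((K'+1)*N+1),
                  (if (q:ℕ) + m = k*N
                    then ((Real.sqrt (P m k) : ℝ):ℂ) * (σ^k * c k) else 0)
                  = (if (q:ℕ) = k*N - m
                    then ((Real.sqrt (P m k) : ℝ):ℂ) * (σ^k * c k) else 0) := by
                intro q
                exact if_congr ⟨fun h => by omega, fun h => by omega⟩ rfl rfl
              simp only [hcongr]
              exact mySumCollapse _ (by have := kNle k (by omega); omega) _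
            · rw [if_neg hk1]
              apply Finset.sum_eq_zero
              intro q _
              have hk0 : k = 0 := by omega
              subst hk0
              rw [if_neg, mul_zero]
              simp only [Nat.zero_mul]
              omega
        _ = _ := by
            rw [← Finset.sum_filter]
            congr 1
            ext x
            simp only [Finset.mem_filter, Finset.mem_range, Finset.mem_Icc]
            omega
    rw [hLHS, Pi.smul_apply, smul_eq_mul, hw m hml σ p]
    by_cases hex : ∃ j, 1 ≤ j ∧ j ≤ K'+1 ∧ (p:ℕ) = j*N - m
    · obtain ⟨j, hj1, hjK, hpj⟩ := hex
      have hNj : N ≤ j*N := Nat.le_mul_of_pos_left N (by omega)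
      have hRHS : (∑ k ∈ range (K'+1+1), if (p:ℕ) + m = k*N
            then ((Real.sqrt (P m k) : ℝ):ℂ) * (σ^k * c k) else 0)
          = ((Real.sqrt (P m j) : ℝ):ℂ) * (σ^j * c j) := by
        rw [Finset.sum_eq_single_of_mem j (Finset.mem_range.mpr (by omega))]
        · rw [if_pos (by omega)]
        · intro k hk hkj
          rw [if_neg]
          intro hcon
          have e1 : k*N = j*N := by omega
          exact hkj (Nat.eq_of_mul_eq_mul_right hNpos e1)
      rw [hRHS]
      have hpc : p = clampIdx ((K'+1)*N) (j*N - m) :=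
        eq_clampIdx (by have := kNle j hjK; omega) p hpj
      subst hpc
      rw [clampIdx_coe (by have := kNle j hjK; omega)] at hpj
      have hrowz : ∀ k, 1 ≤ k → k ≤ K'+1 → k ≠ j+1 → j ≠ k+1 →
          H (clampIdx ((K'+1)*N) (j*N - m)) (clampIdx ((K'+1)*N) (k*N - m))
            * (((Real.sqrt (P m k) : ℝ):ℂ) * (σ^k * c k)) = 0 := by
        intro k hk1 hkK h1 h2
        rcases eq_or_ne (H (clampIdx ((K'+1)*N) (j*N - m)) (clampIdx ((K'+1)*N) (k*N - m))) 0 with h|h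
        · rw [h, zero_mul]
        · exfalso
          rcases hcolm m hm1 hml k hk1 hkK _ h with ⟨hk2, hpc2⟩ | ⟨hkK2, hpc2⟩
          · rw [clampIdx_coe (by have := kNle j hjK; omega)] at hpc2
            obtain ⟨_, e⟩ := grid_eq hm1 hNm hm1 hNm hj1 (show 1 ≤ k-1 by omega) hpc2
            exact h1 (by omega)
          · rw [clampIdx_coe (by have := kNle j hjK; omega)] at hpc2
            obtain ⟨_, e⟩ := grid_eq hm1 hNm hm1 hNm hj1 (show 1 ≤ k+1 by omega) hpc2
            exact h2 (by omega)
      by_cases hjtop : j = K'+1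
      · subst hjtop
        rw [Finset.sum_eq_single_of_mem K' (Finset.mem_Icc.mpr ⟨by omega, by omega⟩)
            (fun b hb hbne => hrowz b (by rw [Finset.mem_Icc] at hb; omega)
              (by rw [Finset.mem_Icc] at hb; omega)
              (by rw [Finset.mem_Icc] at hb; omega) (by omega))]
        rw [hsym (clampIdx ((K'+1)*N) (K'*N - m)) (clampIdx ((K'+1)*N) ((K'+1)*N - m))]
        rw [Eupm m hm1 hml K' (by omega) (by omega)]
        simp only [map_div₀, map_mul, Complex.conj_conj, Complex.conj_ofReal]
        have hmomm : ∑ k ∈ range (K'+1+1), (-1:ℝ)^k * (P m k * ‖c k‖^2) = 0 := by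
          have h := hmom m hml
          rw [← h]
          refine Finset.sum_congr rfl fun k _ => ?_
          ring
        have hendm : Tsum c P m K' = P m (K'+1) * ‖c (K'+1)‖^2 := by
          rw [Tsum_eq]
          exact altEndIcc (fun k => P m k * ‖c k‖^2) K' (by simp [hP0 m hm1]) hmomm
        have hPk : 0 < P m K' := hPpos m hml K' (by omega)
        have hPk1 : 0 < P m (K'+1) := hPpos m hml (K'+1) (by omega)
        have hsplit : ((Real.sqrt (P m K' * P m (K'+1)) : ℝ):ℂ)
            = ((Real.sqrt (P m K') : ℝ):ℂ) * ((Real.sqrt (P m (K'+1)) : ℝ):ℂ) := by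
          rw [Real.sqrt_mul hPk.le]
          push_cast
          rfl
        have hTc : ((Tsum c P m K' : ℝ):ℂ)
            = (((Real.sqrt (P m (K'+1)) : ℝ):ℂ) * ((Real.sqrt (P m (K'+1)) : ℝ):ℂ))
              * (c (K'+1) * (starRingEnd ℂ) (c (K'+1))) := by
          rw [hendm]
          push_cast
          rw [← sqrtMulSelf (P m (K'+1)) hPk1.le, Complex.mul_conj']
        rw [hsplit, hTc]
        rw [show σ * (((Real.sqrt (P m (K'+1)) : ℝ):ℂ) * (σ^(K'+1) * c (K'+1)))
            = σ^K' * ((σ*σ) * (((Real.sqrt (P m (K'+1)) : ℝ):ℂ) * c (K'+1))) from by ring,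
          hσ2, one_mul]
        have hs1 : ((Real.sqrt (P m K') : ℝ):ℂ) ≠ 0 :=
          Complex.ofReal_ne_zero.mpr (Real.sqrt_pos.mpr hPk).ne'
        have hs2 : ((Real.sqrt (P m (K'+1)) : ℝ):ℂ) ≠ 0 :=
          Complex.ofReal_ne_zero.mpr (Real.sqrt_pos.mpr hPk1).ne'
        have h1 := hc K' (by omega)
        have h2 := hc (K'+1) (by omega)
        have h3 := hconj_ne (K'+1) (by omega)
        field_simp
      · by_cases hj1' : j = 1
        · subst hj1'
          rw [Finset.sum_eq_single_of_mem (1+1) (Finset.mem_Icc.mpr ⟨by omega, by omega⟩)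
              (fun b hb hbne => hrowz b (by rw [Finset.mem_Icc] at hb; omega)
                (by rw [Finset.mem_Icc] at hb; omega)
                (by omega) (by rw [Finset.mem_Icc] at hb; omega))]
          rw [Eupm m hm1 hml 1 (by omega) (by omega)]
          have hT1 : Tsum c P m 1 = P m 1 * ‖c 1‖^2 := by
            have h := Tsum_step c P m 0
            rw [Tsum_zero] at h
            simpa using h
          have hP1 : 0 < P m 1 := hPpos m hml 1 (by omega)
          have hP2 : 0 < P m (1+1) := hPpos m hml (1+1) (by omega)
          have hsplit : ((Real.sqrt (P m 1 * P m (1+1)) : ℝ):ℂ)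
              = ((Real.sqrt (P m 1) : ℝ):ℂ) * ((Real.sqrt (P m (1+1)) : ℝ):ℂ) := by
            rw [Real.sqrt_mul hP1.le]
            push_cast
            rfl
          have hTc : ((Tsum c P m 1 : ℝ):ℂ)
              = (((Real.sqrt (P m 1) : ℝ):ℂ) * ((Real.sqrt (P m 1) : ℝ):ℂ))
                * (c 1 * (starRingEnd ℂ) (c 1)) := by
            rw [hT1]
            push_cast
            rw [← sqrtMulSelf (P m 1) hP1.le, Complex.mul_conj']
          rw [hsplit, hTc]
          rw [show σ^(1+1) = 1 from by rw [pow_succ, pow_one, hσ2]]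
          rw [pow_one]
          rw [show σ * (((Real.sqrt (P m 1) : ℝ):ℂ) * (σ * c 1))
              = (σ*σ) * (((Real.sqrt (P m 1) : ℝ):ℂ) * c 1) from by ring, hσ2, one_mul]
          have hs1 : ((Real.sqrt (P m 1) : ℝ):ℂ) ≠ 0 :=
            Complex.ofReal_ne_zero.mpr (Real.sqrt_pos.mpr hP1).ne'
          have hs2 : ((Real.sqrt (P m (1+1)) : ℝ):ℂ) ≠ 0 :=
            Complex.ofReal_ne_zero.mpr (Real.sqrt_pos.mpr hP2).ne'
          have h1 := hc 1 (by omega)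
          have h2 := hc (1+1) (by omega)
          have h3 := hconj_ne 1 (by omega)
          field_simp
        · obtain ⟨j', rfl⟩ : ∃ j', j = j'+1 := ⟨j-1, by omega⟩
          have hj'1 : 1 ≤ j' := by omega
          have hj'K : j'+1+1 ≤ K'+1 := by omega
          rw [sum_twoG (a := j') (b := j'+1+1) _
              (Finset.mem_Icc.mpr ⟨by omega, by omega⟩)
              (Finset.mem_Icc.mpr ⟨by omega, by omega⟩) (by omega)
              (fun b hb h1 h2 => hrowz b (by rw [Finset.mem_Icc] at hb; omega)
                (by rw [Finset.mem_Icc] at hb; omega)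
                (by omega) (by omega))]
          rw [hsym (clampIdx ((K'+1)*N) (j'*N - m)) (clampIdx ((K'+1)*N) ((j'+1)*N - m))]
          rw [Eupm m hm1 hml j' (by omega) (by omega)]
          rw [Eupm m hm1 hml (j'+1) (by omega) (by omega)]
          simp only [map_div₀, map_mul, Complex.conj_conj, Complex.conj_ofReal]
          have hPa : 0 < P m j' := hPpos m hml j' (by omega)
          have hPb : 0 < P m (j'+1) := hPpos m hml (j'+1) (by omega)
          have hPc2 : 0 < P m (j'+1+1) := hPpos m hml (j'+1+1) (by omega)
          have hsplit1 : ((Real.sqrt (P m j' * P m (j'+1)) : ℝ):ℂ)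
              = ((Real.sqrt (P m j') : ℝ):ℂ) * ((Real.sqrt (P m (j'+1)) : ℝ):ℂ) := by
            rw [Real.sqrt_mul hPa.le]
            push_cast
            rfl
          have hsplit2 : ((Real.sqrt (P m (j'+1) * P m (j'+1+1)) : ℝ):ℂ)
              = ((Real.sqrt (P m (j'+1)) : ℝ):ℂ) * ((Real.sqrt (P m (j'+1+1)) : ℝ):ℂ) := by
            rw [Real.sqrt_mul hPb.le]
            push_cast
            rfl
          have hTstep : ((Tsum c P m (j'+1) : ℝ):ℂ)
              = (((Real.sqrt (P m (j'+1)) : ℝ):ℂ) * ((Real.sqrt (P m (j'+1)) : ℝ):ℂ))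
                * (c (j'+1) * (starRingEnd ℂ) (c (j'+1))) - ((Tsum c P m j' : ℝ):ℂ) := by
            have h := Tsum_step c P m j'
            have h2 : Tsum c P m (j'+1) = P m (j'+1) * ‖c (j'+1)‖^2 - Tsum c P m j' := by
              linarith
            rw [h2]
            push_cast
            rw [← sqrtMulSelf (P m (j'+1)) hPb.le, Complex.mul_conj']
          rw [hsplit1, hsplit2, hTstep]
          rw [epow j']
          rw [show σ * (((Real.sqrt (P m (j'+1)) : ℝ):ℂ) * (σ^(j'+1) * c (j'+1)))
              = σ^j' * ((σ*σ) * (((Real.sqrt (P m (j'+1)) : ℝ):ℂ) * c (j'+1))) from by ring,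
            hσ2, one_mul]
          have hs1 : ((Real.sqrt (P m j') : ℝ):ℂ) ≠ 0 :=
            Complex.ofReal_ne_zero.mpr (Real.sqrt_pos.mpr hPa).ne'
          have hs2 : ((Real.sqrt (P m (j'+1)) : ℝ):ℂ) ≠ 0 :=
            Complex.ofReal_ne_zero.mpr (Real.sqrt_pos.mpr hPb).ne'
          have hs3 : ((Real.sqrt (P m (j'+1+1)) : ℝ):ℂ) ≠ 0 :=
            Complex.ofReal_ne_zero.mpr (Real.sqrt_pos.mpr hPc2).ne'
          have h1 := hc j' (by omega)
          have h2 := hc (j'+1) (by omega)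
          have h3 := hc (j'+1+1) (by omega)
          have h4 := hconj_ne (j'+1) (by omega)
          field_simp
          ring
    · have hR : (∑ k ∈ range (K'+1+1), if (p:ℕ) + m = k*N
            then ((Real.sqrt (P m k) : ℝ):ℂ) * (σ^k * c k) else 0) = 0 := by
        apply Finset.sum_eq_zero
        intro k hk
        rw [Finset.mem_range] at hk
        have hcond : ¬((p:ℕ) + m = k*N) := by
          intro hcon
          rcases Nat.eq_zero_or_pos k with h0|h1
          · subst h0; simp only [Nat.zero_mul] at hcon; omega
          · exact hex ⟨k, h1, by omega, by omega⟩
        rw [if_neg hcond]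
      have hL : (∑ k ∈ Icc 1 (K'+1), H p (clampIdx ((K'+1)*N) (k*N - m))
            * (((Real.sqrt (P m k) : ℝ):ℂ) * (σ^k * c k))) = 0 := by
        apply Finset.sum_eq_zero
        intro k hk
        rw [Finset.mem_Icc] at hk
        rcases eq_or_ne (H p (clampIdx ((K'+1)*N) (k*N - m))) 0 with h|h
        · rw [h, zero_mul]
        · exfalso
          rcases hcolm m hm1 hml k hk.1 hk.2 p h with ⟨hk2, hpc2⟩ | ⟨hkK2, hpc2⟩
          · exact hex ⟨k-1, by omega, by omega, hpc2⟩
          · exact hex ⟨k+1, by omega, by omega, hpc2⟩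
      rw [hL, hR, mul_zero]
  exact ⟨⟨hHermit, hsupp⟩, hmain2, hmain3⟩
end

section
/- Let K, l ∈ ℕ with l + 1 ≤ K. A vector x ∈ ℝ^{K+1} satisfies Σ_{k=0}^{K} (−1)^k k^{l'} x_k = 0 for every l' ∈ {0,…,l} (convention 0^0 = 1) if and only if x lies in the linear span of the shifted binomial vectors v_0,…,v_{K−l−1}, where (v_s)_k = C(l+1, k−s) for s ≤ k ≤ s+l+1 and (v_s)_k = 0 otherwise. -/
open Finset fwdDiff

lemma fwdDiff_pow_eq_zero : ∀ m n : ℕ, m < n → (Δ_[(1:ℝ)])^[n] (fun y : ℝ => y ^ m) = 0 := by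
  intro m
  induction m using Nat.strong_induction_on with
  | _ m ih =>
    intro n hn
    obtain ⟨n, rfl⟩ : ∃ k, n = k + 1 := ⟨n - 1, by omega⟩
    have step : Δ_[(1:ℝ)] (fun y : ℝ => y ^ m)
        = ∑ i ∈ range m, (((m.choose i : ℕ) : ℝ)) • (fun y : ℝ => y ^ i) := by
      funext y
      simp only [fwdDiff, Finset.sum_apply, Pi.smul_apply, smul_eq_mul]
      have hb : (y + 1) ^ m = ∑ i ∈ range (m + 1), y ^ i * 1 ^ (m - i) * ((m.choose i : ℕ) : ℝ) :=
        add_pow y 1 m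
      rw [hb, Finset.sum_range_succ]
      simp [Nat.choose_self]
      exact Finset.sum_congr rfl fun i _ => mul_comm _ _
    rw [Function.iterate_succ_apply, step, fwdDiff_iter_finset_sum]
    refine Finset.sum_eq_zero fun i hi => ?_
    have him := Finset.mem_range.mp hi
    rw [fwdDiff_iter_const_smul, ih i him n (by omega), smul_zero]

lemma diff_zero (n m : ℕ) (hm : m < n) (a : ℝ) :
    ∑ j ∈ range (n + 1), (-1 : ℝ) ^ j * ((n.choose j : ℕ) : ℝ) * (a + j) ^ m = 0 := by
  have h := fwdDiff_iter_eq_sum_shift (1:ℝ) (fun y : ℝ => y ^ m) n a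
  rw [fwdDiff_pow_eq_zero m n hm] at h
  simp only [Pi.zero_apply, zsmul_eq_mul, Int.cast_mul, Int.cast_pow, Int.cast_neg,
    Int.cast_one, Int.cast_natCast, nsmul_eq_mul, mul_one] at h
  have h3 : ∑ k ∈ range (n+1), (-1:ℝ)^(n-k) * ((n.choose k : ℕ):ℝ) * (a + k)^m
      = (-1:ℝ)^n * ∑ j ∈ range (n + 1), (-1 : ℝ) ^ j * ((n.choose j : ℕ) : ℝ) * (a + j) ^ m := by
    rw [Finset.mul_sum]
    refine Finset.sum_congr rfl fun k hk => ?_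
    have hk' : k ≤ n := by have := Finset.mem_range.mp hk; omega
    have hs : (-1:ℝ)^n * (-1:ℝ)^k = (-1:ℝ)^(n-k) := by
      rw [← pow_add, show n + k = (n-k) + 2*k by omega, pow_add, pow_mul]
      simp
    rw [← hs]; ring
  rw [h3] at h
  have hne : ((-1:ℝ)^n) ≠ 0 := by simp [pow_ne_zero]
  exact (mul_eq_zero.mp h.symm).resolve_left hne

/-- Lemma 1 of the paper: a vector `x ∈ ℝ^{K+1}` satisfies the
equal-moment conditions `∑_k (−1)^k k^{l'} x_k = 0` for every `0 ≤ l' ≤ l`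
(with `0^0 = 1`) if and only if `x` lies in the span of the variably shifted
cutoff-`(l+1)` binomial coefficient vectors `v_0, …, v_{K−l−1}`, where
`(v_s)_k = C(l+1, k−s)` for `s ≤ k ≤ s + l + 1` and `0` otherwise. -/
theorem stmt_6 (K l : ℕ) (hl : l + 1 ≤ K)
    (v : Fin (K - l) → (Fin (K + 1) → ℝ))
    (hv : ∀ (s : Fin (K - l)) (k : Fin (K + 1)),
      v s k = if (s : ℕ) ≤ (k : ℕ) ∧ (k : ℕ) ≤ (s : ℕ) + (l + 1)
        then ((l + 1).choose ((k : ℕ) - (s : ℕ)) : ℝ) else 0)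
    (x : Fin (K + 1) → ℝ) :
    (∀ l' ≤ l, ∑ k : Fin (K + 1), (-1 : ℝ) ^ (k : ℕ) * ((k : ℕ) : ℝ) ^ l' * x k = 0) ↔
      x ∈ Submodule.span ℝ (Set.range v) := by
  -- moments of the basic vectors vanish
  have hmomv : ∀ (s : Fin (K - l)) (l' : ℕ), l' ≤ l →
      ∑ k : Fin (K + 1), (-1 : ℝ) ^ (k : ℕ) * ((k : ℕ) : ℝ) ^ l' * v s k = 0 := by
    intro s l' hl'
    have hsle : (s : ℕ) + l + 2 ≤ K + 1 := by have := s.isLt; omega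
    have : ∑ k : Fin (K + 1), (-1 : ℝ) ^ (k : ℕ) * ((k : ℕ) : ℝ) ^ l' * v s k
        = ∑ k ∈ range (K + 1), (-1 : ℝ) ^ k * (k : ℝ) ^ l' *
            (if (s : ℕ) ≤ k ∧ k ≤ (s : ℕ) + (l + 1)
              then ((l + 1).choose (k - (s : ℕ)) : ℝ) else 0) := by
      rw [← Fin.sum_univ_eq_sum_range (fun k => (-1 : ℝ) ^ k * (k : ℝ) ^ l' *
            (if (s : ℕ) ≤ k ∧ k ≤ (s : ℕ) + (l + 1)
              then ((l + 1).choose (k - (s : ℕ)) : ℝ) else 0)) (K+1)]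
      exact Finset.sum_congr rfl fun k _ => by rw [hv s k]
    rw [this]
    rw [← Finset.sum_subset (by rw [Finset.range_eq_Ico]; exact Finset.Ico_subset_Ico (Nat.zero_le _) (by omega) :
          Finset.Ico (s:ℕ) ((s:ℕ) + (l+2)) ⊆ range (K+1)) ?hout]
    case hout =>
      intro k _ hk
      rw [Finset.mem_Ico] at hk
      rw [if_neg (by omega), mul_zero]
    rw [Finset.sum_Ico_eq_sum_range]
    have hred : ∀ j ∈ range ((s:ℕ) + (l+2) - (s:ℕ)),
        (-1 : ℝ) ^ ((s:ℕ) + j) * (((s:ℕ) + j : ℕ) : ℝ) ^ l' *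
          (if (s : ℕ) ≤ (s:ℕ) + j ∧ (s:ℕ) + j ≤ (s : ℕ) + (l + 1)
            then ((l + 1).choose ((s:ℕ) + j - (s : ℕ)) : ℝ) else 0)
        = (-1:ℝ)^(s:ℕ) * ((-1:ℝ)^j * (((l+1).choose j : ℕ) : ℝ) * (((s:ℕ):ℝ) + j) ^ l') := by
      intro j hj
      have hjle : j ≤ l + 1 := by have := Finset.mem_range.mp hj; omega
      rw [if_pos ⟨by omega, by omega⟩, Nat.add_sub_cancel_left]
      push_cast
      ring
    rw [show (s:ℕ) + (l+2) - (s:ℕ) = (l+1) + 1 by omega] at *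
    rw [Finset.sum_congr rfl hred, ← Finset.mul_sum,
      diff_zero (l+1) l' (by omega) ((s:ℕ):ℝ), mul_zero]
  have hmomspan : ∀ u, u ∈ Submodule.span ℝ (Set.range v) → ∀ l' ≤ l,
      ∑ k : Fin (K + 1), (-1 : ℝ) ^ (k : ℕ) * ((k : ℕ) : ℝ) ^ l' * u k = 0 := by
    intro u hu l' hl'
    induction hu using Submodule.span_induction with
    | mem a ha => obtain ⟨s, rfl⟩ := ha; exact hmomv s l' hl'
    | zero => simp
    | add a b _ _ ha hb =>
      rw [show ∑ k : Fin (K + 1), (-1 : ℝ) ^ (k : ℕ) * ((k : ℕ) : ℝ) ^ l' * (a + b) k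
          = (∑ k : Fin (K + 1), (-1 : ℝ) ^ (k : ℕ) * ((k : ℕ) : ℝ) ^ l' * a k)
            + ∑ k : Fin (K + 1), (-1 : ℝ) ^ (k : ℕ) * ((k : ℕ) : ℝ) ^ l' * b k by
        rw [← Finset.sum_add_distrib]; exact Finset.sum_congr rfl fun k _ => by
          simp only [Pi.add_apply]; ring]
      rw [ha, hb, add_zero]
    | smul c a _ ha =>
      rw [show ∑ k : Fin (K + 1), (-1 : ℝ) ^ (k : ℕ) * ((k : ℕ) : ℝ) ^ l' * (c • a) k
          = c * ∑ k : Fin (K + 1), (-1 : ℝ) ^ (k : ℕ) * ((k : ℕ) : ℝ) ^ l' * a k by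
        rw [Finset.mul_sum]; exact Finset.sum_congr rfl fun k _ => by
          simp only [Pi.smul_apply, smul_eq_mul]; ring]
      rw [ha, mul_zero]
  constructor
  · intro h
    -- Step A: build w in the span agreeing with x on indices < K - l
    have stepA : ∀ m : ℕ, m ≤ K - l → ∃ w, w ∈ Submodule.span ℝ (Set.range v) ∧
        ∀ k : Fin (K + 1), (k : ℕ) < m → x k = w k := by
      intro m
      induction m with
      | zero => exact fun _ => ⟨0, Submodule.zero_mem _, fun k hk => by omega⟩
      | succ m ih =>
        intro hm
        obtain ⟨w, hwspan, hwag⟩ := ih (by omega)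
        have hmlt : m < K - l := hm
        have hmK : m < K + 1 := by omega
        refine ⟨w + (x ⟨m, hmK⟩ - w ⟨m, hmK⟩) • v ⟨m, hmlt⟩, Submodule.add_mem _ hwspan
          (Submodule.smul_mem _ _ (Submodule.subset_span ⟨⟨m, hmlt⟩, rfl⟩)), ?_⟩
        intro k hk
        rcases Nat.lt_or_ge (k : ℕ) m with hlt | hge
        · have hv0 : v ⟨m, hmlt⟩ k = 0 := by
            rw [hv]
            simp only [Fin.val_mk]
            rw [if_neg (by omega)]
          simp only [Pi.add_apply, Pi.smul_apply, smul_eq_mul, hv0, mul_zero, add_zero]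
          exact hwag k hlt
        · have hkm : (k : ℕ) = m := by omega
          have hke : (⟨m, hmK⟩ : Fin (K + 1)) = k := Fin.ext (by simp [hkm])
          have hv1 : v ⟨m, hmlt⟩ k = 1 := by
            rw [hv]
            simp only [Fin.val_mk, hkm]
            rw [if_pos ⟨le_rfl, by omega⟩]
            simp
          rw [← hke]
          simp only [Pi.add_apply, Pi.smul_apply, smul_eq_mul, hke, hv1]
          ring
    obtain ⟨w, hwspan, hwag⟩ := stepA (K - l) le_rfl
    -- residual y has vanishing moments and vanishes below K - l
    set y : Fin (K + 1) → ℝ := fun k => x k - w k with hy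
    have hmomy : ∀ l' ≤ l,
        ∑ k : Fin (K + 1), (-1 : ℝ) ^ (k : ℕ) * ((k : ℕ) : ℝ) ^ l' * y k = 0 := by
      intro l' hl'
      have : ∑ k : Fin (K + 1), (-1 : ℝ) ^ (k : ℕ) * ((k : ℕ) : ℝ) ^ l' * y k
          = (∑ k : Fin (K + 1), (-1 : ℝ) ^ (k : ℕ) * ((k : ℕ) : ℝ) ^ l' * x k)
            - ∑ k : Fin (K + 1), (-1 : ℝ) ^ (k : ℕ) * ((k : ℕ) : ℝ) ^ l' * w k := by
        rw [← Finset.sum_sub_distrib]; exact Finset.sum_congr rfl fun k _ => by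
          simp only [hy]; ring
      rw [this, h l' hl', hmomspan w hwspan l' hl', sub_zero]
    have hylow : ∀ k : Fin (K + 1), (k : ℕ) < K - l → y k = 0 := fun k hk => by
      simp only [hy, hwag k hk, sub_self]
    -- Lagrange argument: y vanishes on the top indices too
    have hyhigh : ∀ k0 : Fin (K + 1), K - l ≤ (k0 : ℕ) → y k0 = 0 := by
      intro k0 hk0
      set T : Finset ℕ := (Finset.Icc (K - l) K).erase (k0 : ℕ) with hT
      set q : Polynomial ℝ := ∏ i ∈ T, (Polynomial.X - Polynomial.C (i : ℝ)) with hq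
      have hk0mem : (k0 : ℕ) ∈ Finset.Icc (K - l) K := by
        rw [Finset.mem_Icc]; exact ⟨hk0, by omega⟩
      have hTcard : T.card = l := by
        rw [hT, Finset.card_erase_of_mem hk0mem, Nat.card_Icc]
        omega
      have hqdeg : q.natDegree = l := by
        rw [hq, Polynomial.natDegree_prod_of_monic _ _
          (fun i _ => Polynomial.monic_X_sub_C _)]
        simp only [Polynomial.natDegree_X_sub_C]
        rw [Finset.sum_const, hTcard, smul_eq_mul, mul_one]
      have hqeval : ∀ z : ℝ, q.eval z = ∏ i ∈ T, (z - (i : ℝ)) := by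
        intro z; rw [hq, Polynomial.eval_prod]; simp
      have hmain : ∑ k : Fin (K + 1), (-1 : ℝ) ^ (k : ℕ) * q.eval ((k : ℕ) : ℝ) * y k = 0 := by
        have expand : ∀ k : Fin (K + 1),
            (-1 : ℝ) ^ (k : ℕ) * q.eval ((k : ℕ) : ℝ) * y k
            = ∑ i ∈ range (l + 1), q.coeff i *
                ((-1 : ℝ) ^ (k : ℕ) * ((k : ℕ) : ℝ) ^ i * y k) := by
          intro k
          rw [Polynomial.eval_eq_sum_range' (by omega : q.natDegree < l + 1) (((k:ℕ):ℝ)),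
            Finset.mul_sum, Finset.sum_mul]
          exact Finset.sum_congr rfl fun i _ => by ring
        rw [Finset.sum_congr rfl fun k _ => expand k, Finset.sum_comm]
        refine Finset.sum_eq_zero fun i hi => ?_
        rw [← Finset.mul_sum, hmomy i (by have := Finset.mem_range.mp hi; omega), mul_zero]
      have hsingle : ∑ k : Fin (K + 1), (-1 : ℝ) ^ (k : ℕ) * q.eval ((k : ℕ) : ℝ) * y k
          = (-1 : ℝ) ^ (k0 : ℕ) * q.eval ((k0 : ℕ) : ℝ) * y k0 := by
        refine Finset.sum_eq_single k0 ?_ (by simp)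
        intro k _ hkne
        rcases Nat.lt_or_ge (k : ℕ) (K - l) with hlow | hhigh
        · rw [hylow k hlow, mul_zero]
        · have hkT : (k : ℕ) ∈ T := by
            rw [hT, Finset.mem_erase, Finset.mem_Icc]
            exact ⟨fun hc => hkne (Fin.ext hc), hhigh, by omega⟩
          rw [hqeval]
          rw [Finset.prod_eq_zero hkT (by simp)]
          ring
      rw [hsingle] at hmain
      have hq0 : q.eval ((k0 : ℕ) : ℝ) ≠ 0 := by
        rw [hqeval]
        refine Finset.prod_ne_zero_iff.mpr fun i hiT => ?_
        have hine : i ≠ (k0 : ℕ) := (Finset.mem_erase.mp hiT).1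
        intro hc
        have hieq : ((i : ℕ) : ℝ) = ((k0 : ℕ) : ℝ) := by linarith
        exact hine (by exact_mod_cast hieq)
      have hs0 : ((-1 : ℝ) ^ (k0 : ℕ)) ≠ 0 := by simp [pow_ne_zero]
      rcases mul_eq_zero.mp hmain with h' | h'
      · exact absurd (mul_eq_zero.mp h') (by push_neg; exact ⟨hs0, hq0⟩)
      · exact h'
    have hxw : x = w := by
      funext k
      rcases Nat.lt_or_ge (k : ℕ) (K - l) with hlow | hhigh
      · exact hwag k hlow
      · have := hyhigh k hhigh
        simp only [hy] at this
        linarith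
    rw [hxw]
    exact hwspan
  · intro hx l' hl'
    exact hmomspan x hx l' hl'
end

section
/- Let K ∈ ℕ, α, β ∈ ℝ, and a, b, c : {0,…,K} → ℂ with c_k ≠ 0 and |c_k|² = α|a_k|² + β|b_k|² for all k. Let w : {0,…,K} → ℂ be arbitrary weights, and suppose A, B ∈ M_{K+1}(ℂ) satisfy, for both σ ∈ {+1,−1} and every k ∈ {0,…,K}: Σ_{k'=0}^{K} A_{k,k'} σ^{k'} w_{k'} a_{k'} = σ·σ^k w_k a_k, and the same identity with (B,b) in place of (A,a). Define C ∈ M_{K+1}(ℂ) by C_{k,k'} = (α A_{k,k'} conj(a_k) a_{k'} + β B_{k,k'} conj(b_k) b_{k'}) / (conj(c_k) c_{k'}). Then for both σ ∈ {+1,−1} and every k: Σ_{k'=0}^{K} C_{k,k'} σ^{k'} w_{k'} c_{k'} = σ·σ^k w_k c_k; moreover C_{k,k'} = 0 whenever A_{k,k'} = B_{k,k'} = 0. -/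
open Finset

/-- The combination construction (Eq. HConstruction together
with Eqs. gateDerivation and ETDerivation) from the proof of Theorem 1 of the
paper: if `A` and `B` act as `±1` on the weighted signed coefficient vectors of
two codes `a`, `b` whose squared coefficients combine linearly into a third
code's squared coefficients `|c_k|² = α|a_k|² + β|b_k|²`, then the combined
matrix `C_{k,k'} = (α A_{k,k'} conj(a_k) a_{k'} + β B_{k,k'} conj(b_k) b_{k'})
/ (conj(c_k) c_{k'})` acts in the same way on the third code, and has no new
nonzero matrix elements. -/
theorem stmt_7 (K : ℕ) (α β : ℝ) (a b c : Fin (K + 1) → ℂ)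
    (hc : ∀ k, c k ≠ 0)
    (hsq : ∀ k, ‖c k‖ ^ 2 = α * ‖a k‖ ^ 2 + β * ‖b k‖ ^ 2)
    (w : Fin (K + 1) → ℂ)
    (A B C : Matrix (Fin (K + 1)) (Fin (K + 1)) ℂ)
    (hA : ∀ σ : ℂ, (σ = 1 ∨ σ = -1) → ∀ k : Fin (K + 1),
      ∑ k' : Fin (K + 1), A k k' * σ ^ (k' : ℕ) * w k' * a k' =
        σ * σ ^ (k : ℕ) * w k * a k)
    (hB : ∀ σ : ℂ, (σ = 1 ∨ σ = -1) → ∀ k : Fin (K + 1),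
      ∑ k' : Fin (K + 1), B k k' * σ ^ (k' : ℕ) * w k' * b k' =
        σ * σ ^ (k : ℕ) * w k * b k)
    (hC : ∀ k k' : Fin (K + 1),
      C k k' = ((α : ℂ) * A k k' * (starRingEnd ℂ) (a k) * a k' +
                (β : ℂ) * B k k' * (starRingEnd ℂ) (b k) * b k') /
        ((starRingEnd ℂ) (c k) * c k')) :
    (∀ σ : ℂ, (σ = 1 ∨ σ = -1) → ∀ k : Fin (K + 1),
      ∑ k' : Fin (K + 1), C k k' * σ ^ (k' : ℕ) * w k' * c k' =
        σ * σ ^ (k : ℕ) * w k * c k) ∧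
    (∀ k k' : Fin (K + 1), A k k' = 0 → B k k' = 0 → C k k' = 0) := by
  constructor
  · intro σ hσ k
    have hck : (starRingEnd ℂ) (c k) ≠ 0 := by
      simpa using hc k
    have key : ∀ k' : Fin (K + 1),
        C k k' * σ ^ (k' : ℕ) * w k' * c k' =
          ((starRingEnd ℂ) (c k))⁻¹ *
            ((α : ℂ) * (starRingEnd ℂ) (a k) * (A k k' * σ ^ (k' : ℕ) * w k' * a k') +
             (β : ℂ) * (starRingEnd ℂ) (b k) * (B k k' * σ ^ (k' : ℕ) * w k' * b k')) := by
      intro k'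
      rw [hC]
      field_simp [hc k']
    rw [Finset.sum_congr rfl fun k' _ => key k']
    rw [← Finset.mul_sum, ← Finset.sum_add_distrib.symm]
    rw [← Finset.mul_sum, ← Finset.mul_sum]
    rw [hA σ hσ k, hB σ hσ k]
    have habs : (α : ℂ) * ((starRingEnd ℂ) (a k) * a k) +
        (β : ℂ) * ((starRingEnd ℂ) (b k) * b k) = (starRingEnd ℂ) (c k) * c k := by
      rw [Complex.conj_mul', Complex.conj_mul', Complex.conj_mul']
      exact_mod_cast congrArg (Complex.ofReal) (hsq k).symm
    field_simp
    linear_combination (σ * σ ^ (k : ℕ) * w k) * habs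
  · intro k k' hA0 hB0
    rw [hC, hA0, hB0]
    simp
end

section
/- Let N, K, l ∈ ℕ with l ≤ N − 1 and l + 1 ≤ K. Let c : {0,…,K} → ℂ with every c_k ≠ 0, with Σ_{k even} |c_k|² = Σ_{k odd} |c_k|² = 1, and with Σ_{k=0}^{K} (−1)^k k^{l'} |c_k|² = 0 for every l' ∈ {0,…,l}. In ℂ^{KN+1} set u_0 = Σ_{k even} c_k e_{kN}, u_1 = Σ_{k odd} c_k e_{kN}, P_C = u_0 u_0^† + u_1 u_1^†, let E = {A^m D^j : m + 2j ≤ l} and V = span_ℂ{E P_C : E ∈ E} ⊆ M_{KN+1}(ℂ). Assume the exact Knill–Laflamme conditions hold: u_0^† E_1^† E_2 u_0 = u_1^† E_1^† E_2 u_1 and u_0^† E_1^† E_2 u_1 = 0 for all E_1, E_2 ∈ E. Let α ∈ ℂ with α ≠ 0, set ψ = u_0 + α u_1 and ψ' = conj(α) u_0 − u_1, and assume the vectors {E ψ : E ∈ E} are linearly independent. Suppose H ∈ M_{KN+1}(ℂ) is Hermitian, satisfies [H, E] ∈ V for every E ∈ V, and satisfies H ψ = λ ψ and H ψ' = λ'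 ψ' with λ ≠ λ'. Then there exist at least ⌊l/2⌋ + 1 distinct positive odd integers u such that H_{p,q} ≠ 0 for some position (p,q) with |p − q| = uN. -/
/-!
Let `v` be the codeword whose parity differs from that of `K`: it has no component on the top
Fock level `K N`, while `(H v)_{KN} ≠ 0` because `H` acts on `u₀, u₁` through the eigenvectors
`ψ, ψ'` with distinct eigenvalues. No error `A ^ m D ^ j P` moves `v` onto the top level (`A`
lowers, `D` is diagonal), so by error transparency neither does `[H, D ^ j P]` for `2 j ≤ l`. At
the top level this reads `∑ₖ H_{KN,kN} c_k (k N) ^ j = (H v)_{KN} (K N) ^ j` for `j ≤ ⌊l/2⌋`, and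
a Vandermonde argument forces at least `⌊l/2⌋ + 1` nonzero entries `H_{KN,kN}`, each at distance
`(K - k) N` from the diagonal with `K - k` odd.
-/

open Finset Matrix

section Moments

open Polynomial

theorem sum_mul_eval_eq_of_moments {R ι : Type*} [CommRing R] (T : Finset ι) (x w : ι → R)
    (κ y : R) {J : ℕ} (hmom : ∀ j ≤ J, ∑ k ∈ T, w k * x k ^ j = κ * y ^ j)
    {p : R[X]} (hp : p.natDegree ≤ J) :
    ∑ k ∈ T, w k * p.eval (x k) = κ * p.eval y := by
  have hlt : p.natDegree < J + 1 := Nat.lt_succ_of_le hp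
  simp_rw [eval_eq_sum_range' hlt, mul_sum]
  rw [sum_comm]
  refine sum_congr rfl fun j hj => ?_
  rw [show κ * (p.coeff j * y ^ j) = p.coeff j * (κ * y ^ j) by ring,
    ← hmom j (Nat.lt_succ_iff.mp (mem_range.mp hj)), mul_sum]
  exact sum_congr rfl fun k _ => by ring

theorem lt_card_of_moments {R ι : Type*} [CommRing R] [IsDomain R] {T : Finset ι}
    {x w : ι → R} {κ y : R} {J : ℕ} (hκ : κ ≠ 0) (hy : ∀ k ∈ T, x k ≠ y)
    (hmom : ∀ j ≤ J, ∑ k ∈ T, w k * x k ^ j = κ * y ^ j) : J < #T := by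
  by_contra! hJ
  have hdeg : (∏ k ∈ T, (X - C (x k))).natDegree ≤ J := by
    rw [natDegree_prod_of_monic _ _ fun k _ => monic_X_sub_C (x k)]
    simpa using hJ
  have h := sum_mul_eval_eq_of_moments T x w κ y hmom hdeg
  simp only [eval_prod, eval_sub, eval_X, eval_C] at h
  rw [sum_eq_zero fun k hk => by rw [prod_eq_zero hk (sub_self _), mul_zero]] at h
  exact mul_ne_zero hκ (prod_ne_zero_iff.mpr fun k hk => sub_ne_zero.mpr (hy k hk).symm) h.symm

end Moments

section SingleSums

variable {ι n R : Type*} [DecidableEq n] [CommSemiring R]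

theorem sum_single_apply_of_injOn {e : ι → n} {S : Set ι} (he : Set.InjOn e S) {T : Finset ι}
    (hT : ↑T ⊆ S) (c : ι → R) {i : ι} (hi : i ∈ S) [DecidableEq ι] :
    (∑ k ∈ T, Pi.single (e k) (c k) : n → R) (e i) = if i ∈ T then c i else 0 := by
  rw [Finset.sum_apply, ← sum_ite_eq T i c]
  exact sum_congr rfl fun k hk => by simp only [Pi.single_apply, he.eq_iff hi (hT hk)]

theorem dotProduct_sum_single [Fintype n] (x : n → R) (e : ι → n) (T : Finset ι) (c : ι → R) :
    x ⬝ᵥ ∑ k ∈ T, Pi.single (e k) (c k) = ∑ k ∈ T, x (e k) * c k := by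
  simp [dotProduct_sum, dotProduct_single]

theorem mulVec_sum_single_apply [Fintype n] {m : Type*} (M : Matrix m n R) (e : ι → n)
    (T : Finset ι) (c : ι → R) (i : m) :
    (M *ᵥ ∑ k ∈ T, Pi.single (e k) (c k)) i = ∑ k ∈ T, M i (e k) * c k :=
  dotProduct_sum_single _ e T c

theorem star_sum_single_dotProduct_sum_single [Fintype n] [StarRing R] {e : ι → n} {S : Set ι}
    (he : Set.InjOn e S) {T T' : Finset ι} (hT : ↑T ⊆ S) (hT' : ↑T' ⊆ S) (c : ι → R)
    [DecidableEq ι] :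
    star (∑ k ∈ T', Pi.single (e k) (c k)) ⬝ᵥ ∑ k ∈ T, Pi.single (e k) (c k)
      = ∑ k ∈ T ∩ T', star (c k) * c k := by
  rw [dotProduct_sum_single, ← sum_ite_mem]
  refine sum_congr rfl fun k hk => ?_
  rw [Pi.star_apply, sum_single_apply_of_injOn he hT' c (hT hk)]
  split_ifs <;> simp

end SingleSums

section Errors

variable {n R : Type*} [Fintype n] [CommRing R]

/-- The space `V` of the paper. -/
def errorSpan [DecidableEq n] (A D P : Matrix n n R) (l : ℕ) : Submodule R (Matrix n n R) :=
  Submodule.span R ((· * P) '' {E | ∃ m j : ℕ, m + 2 * j ≤ l ∧ E = A ^ m * D ^ j})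

theorem mulVec_apply_eq_zero_of_mem_span {s : Set (Matrix n n R)} {v : n → R} {i : n}
    (hs : ∀ X ∈ s, (X *ᵥ v) i = 0) {X : Matrix n n R} (hX : X ∈ Submodule.span R s) :
    (X *ᵥ v) i = 0 := by
  induction hX using Submodule.span_induction with
  | mem X h => exact hs X h
  | zero => simp
  | add X Y _ _ hX hY => simp [add_mulVec, hX, hY]
  | smul a X _ hX => simp [smul_mulVec, hX]

theorem pow_mul_diagonal_pow_mulVec_apply_eq_zero [DecidableEq n] {A : Matrix n n R}
    {d v : n → R} {i : n} (hA : ∀ r, A i r = 0) (hv : v i = 0) (m j : ℕ) :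
    ((A ^ m * diagonal d ^ j) *ᵥ v) i = 0 := by
  rcases m with _ | m
  · simp [diagonal_pow, mulVec_diagonal, hv]
  · rw [pow_succ', mul_assoc, ← mulVec_mulVec]
    simp [mulVec, dotProduct, hA]

theorem mulVec_apply_eq_zero_of_mem_errorSpan [DecidableEq n] {A P : Matrix n n R}
    {d v : n → R} {i : n} (hA : ∀ r, A i r = 0) (hv : v i = 0) (hPv : P *ᵥ v = v) {l : ℕ}
    {X : Matrix n n R} (hX : X ∈ errorSpan A (diagonal d) P l) : (X *ᵥ v) i = 0 := by
  refine mulVec_apply_eq_zero_of_mem_span ?_ hX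
  rintro _ ⟨_, ⟨m, j, -, rfl⟩, rfl⟩
  rw [← mulVec_mulVec, hPv]
  exact pow_mul_diagonal_pow_mulVec_apply_eq_zero hA hv m j

theorem mulVec_mulVec_apply_eq_of_commutator {H Y P : Matrix n n R} {v : n → R} {i : n}
    (hPv : P *ᵥ v = v) (hPHv : P *ᵥ (H *ᵥ v) = H *ᵥ v)
    (hcomm : ((H * (Y * P) - Y * P * H) *ᵥ v) i = 0) :
    (H *ᵥ (Y *ᵥ v)) i = (Y *ᵥ (H *ᵥ v)) i := by
  rwa [sub_mulVec, ← mulVec_mulVec, ← mulVec_mulVec, ← mulVec_mulVec, ← mulVec_mulVec, hPv,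
    hPHv, Pi.sub_apply, sub_eq_zero] at hcomm

end Errors

section Eigen

variable {n R : Type*} [Fintype n] [Field R]

theorem mulVec_smul_add_smul_of_eigen {H : Matrix n n R} {ψ ψ' : n → R} {lam lam' : R}
    (hψ : H *ᵥ ψ = lam • ψ) (hψ' : H *ᵥ ψ' = lam' • ψ') (a b : R) :
    H *ᵥ (a • ψ + b • ψ') = (a * lam) • ψ + (b * lam') • ψ' := by
  rw [mulVec_add, mulVec_smul, mulVec_smul, hψ, hψ', smul_smul, smul_smul]

theorem mulVec_smul_add_smul_of_fixed {P : Matrix n n R} {ψ ψ' : n → R}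
    (hψ : P *ᵥ ψ = ψ) (hψ' : P *ᵥ ψ' = ψ') (a b : R) :
    P *ᵥ (a • ψ + b • ψ') = a • ψ + b • ψ' := by
  rw [mulVec_add, mulVec_smul, mulVec_smul, hψ, hψ']

theorem mulVec_smul_add_smul_apply_ne_zero {H : Matrix n n R} {ψ ψ' : n → R} {lam lam' : R}
    (hψ : H *ᵥ ψ = lam • ψ) (hψ' : H *ᵥ ψ' = lam' • ψ') (hll : lam ≠ lam') {a b : R} {i : n}
    (hx : (a • ψ + b • ψ') i = 0) (ha : a * ψ i ≠ 0) :
    (H *ᵥ (a • ψ + b • ψ')) i ≠ 0 := by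
  simp only [Pi.add_apply, Pi.smul_apply, smul_eq_mul] at hx
  rw [mulVec_smul_add_smul_of_eigen hψ hψ', Pi.add_apply, Pi.smul_apply, Pi.smul_apply,
    smul_eq_mul, smul_eq_mul,
    show a * lam * ψ i + b * lam' * ψ' i = a * ψ i * (lam - lam') + lam' * (a * ψ i + b * ψ' i)
      by ring, hx, mul_zero, add_zero]
  exact mul_ne_zero ha (sub_ne_zero.mpr hll)

end Eigen

theorem vecMulVec_add_vecMulVec_mulVec_left {n R : Type*} [Fintype n] [CommRing R]
    [StarRing R] {u₀ u₁ : n → R} (h₀₀ : star u₀ ⬝ᵥ u₀ = 1) (h₁₀ : star u₁ ⬝ᵥ u₀ = 0) :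
    (vecMulVec u₀ (star u₀) + vecMulVec u₁ (star u₁)) *ᵥ u₀ = u₀ := by
  simp [add_mulVec, vecMulVec_mulVec, h₀₀, h₁₀]

theorem one_add_mul_conj_ne_zero (α : ℂ) : 1 + α * starRingEnd ℂ α ≠ 0 := by
  rw [Complex.mul_conj]
  exact_mod_cast (add_pos_of_pos_of_nonneg one_pos (Complex.normSq_nonneg α)).ne'

theorem eq_smul_add_smul_conj {n : Type*} (u₀ u₁ : n → ℂ) {α t : ℂ}
    (ht : t = 1 + α * starRingEnd ℂ α) :
    u₀ = t⁻¹ • (u₀ + α • u₁) + (t⁻¹ * α) • (starRingEnd ℂ α • u₀ - u₁) ∧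
    u₁ = (t⁻¹ * starRingEnd ℂ α) • (u₀ + α • u₁) + (-t⁻¹) • (starRingEnd ℂ α • u₀ - u₁) := by
  have ht₀ : t ≠ 0 := ht ▸ one_add_mul_conj_ne_zero α
  subst ht
  constructor <;> funext i <;>
    simp only [Pi.add_apply, Pi.sub_apply, Pi.smul_apply, smul_eq_mul] <;> field_simp <;> ring

/-- The index of the Fock state `|k N⟩` in `ℂ^{K N + 1}`; it wraps around for `k > K`. -/
def fockIndex (N K k : ℕ) : Fin (K * N + 1) := Fin.ofNat _ (k * N)

section FockIndex

variable {N K : ℕ}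

theorem val_fockIndex {k : ℕ} (hk : k ≤ K) : (fockIndex N K k : ℕ) = k * N := by
  rw [fockIndex, Fin.val_ofNat, Nat.mod_eq_of_lt (Nat.lt_succ_of_le (Nat.mul_le_mul_right N hk))]

theorem fockIndex_self : fockIndex N K K = Fin.last (K * N) :=
  Fin.ext (val_fockIndex le_rfl)

theorem injOn_fockIndex (hN : 0 < N) : Set.InjOn (fockIndex N K) (range (K + 1)) := by
  intro k hk k' hk' h
  have h' := congrArg Fin.val h
  rw [val_fockIndex (mem_range_succ_iff.mp hk), val_fockIndex (mem_range_succ_iff.mp hk')] at h'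
  exact Nat.eq_of_mul_eq_mul_right hN h'

theorem eq_sum_single_fockIndex {T : Finset ℕ} (hT : T ⊆ range (K + 1)) {c : ℕ → ℂ}
    {u : Fin (K * N + 1) → ℂ}
    (hu : ∀ n : Fin (K * N + 1), u n = ∑ k ∈ T, if (n : ℕ) = k * N then c k else 0) :
    u = ∑ k ∈ T, Pi.single (fockIndex N K k) (c k) := by
  funext n
  rw [hu, Finset.sum_apply]
  refine sum_congr rfl fun k hk => ?_
  simp only [Pi.single_apply, Fin.ext_iff, val_fockIndex (mem_range_succ_iff.mp (hT hk))]

end FockIndex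

theorem star_sum_single_fockIndex_dotProduct {N K : ℕ} (hN : 0 < N) {T T' : Finset ℕ}
    (hT : T ⊆ range (K + 1)) (hT' : T' ⊆ range (K + 1)) (c : ℕ → ℂ) :
    star (∑ k ∈ T', Pi.single (fockIndex N K k) (c k)) ⬝ᵥ
        ∑ k ∈ T, Pi.single (fockIndex N K k) (c k)
      = ((∑ k ∈ T ∩ T', ‖c k‖ ^ 2 : ℝ) : ℂ) := by
  rw [star_sum_single_dotProduct_sum_single (injOn_fockIndex hN) (coe_subset.mpr hT)
    (coe_subset.mpr hT')]
  push_cast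
  exact sum_congr rfl fun k _ => by rw [RCLike.star_def, Complex.conj_mul']

theorem projector_mulVec_codewords {N K : ℕ} (hN : 0 < N) {c : ℕ → ℂ} {T₀ T₁ : Finset ℕ}
    (hT₀ : T₀ ⊆ range (K + 1)) (hT₁ : T₁ ⊆ range (K + 1)) (hdisj : Disjoint T₀ T₁)
    (hnorm₀ : ∑ k ∈ T₀, ‖c k‖ ^ 2 = 1) (hnorm₁ : ∑ k ∈ T₁, ‖c k‖ ^ 2 = 1)
    {u₀ u₁ : Fin (K * N + 1) → ℂ}
    (hu₀ : u₀ = ∑ k ∈ T₀, Pi.single (fockIndex N K k) (c k))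
    (hu₁ : u₁ = ∑ k ∈ T₁, Pi.single (fockIndex N K k) (c k)) :
    (vecMulVec u₀ (star u₀) + vecMulVec u₁ (star u₁)) *ᵥ u₀ = u₀ ∧
      (vecMulVec u₀ (star u₀) + vecMulVec u₁ (star u₁)) *ᵥ u₁ = u₁ := by
  have h₀₀ : star u₀ ⬝ᵥ u₀ = 1 := by
    rw [hu₀, star_sum_single_fockIndex_dotProduct hN hT₀ hT₀, inter_self, hnorm₀,
      Complex.ofReal_one]
  have h₁₁ : star u₁ ⬝ᵥ u₁ = 1 := by
    rw [hu₁, star_sum_single_fockIndex_dotProduct hN hT₁ hT₁, inter_self, hnorm₁,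
      Complex.ofReal_one]
  have h₁₀ : star u₁ ⬝ᵥ u₀ = 0 := by
    rw [hu₀, hu₁, star_sum_single_fockIndex_dotProduct hN hT₀ hT₁,
      disjoint_iff_inter_eq_empty.mp hdisj, sum_empty, Complex.ofReal_zero]
  have h₀₁ : star u₀ ⬝ᵥ u₁ = 0 := by
    rw [hu₀, hu₁, star_sum_single_fockIndex_dotProduct hN hT₁ hT₀,
      disjoint_iff_inter_eq_empty.mp hdisj.symm, sum_empty, Complex.ofReal_zero]
  refine ⟨vecMulVec_add_vecMulVec_mulVec_left h₀₀ h₁₀, ?_⟩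
  rw [add_comm (vecMulVec u₀ _)]
  exact vecMulVec_add_vecMulVec_mulVec_left h₁₁ h₀₁

theorem sum_single_fockIndex_apply_last {N K : ℕ} (hN : 0 < N) {T : Finset ℕ}
    (hT : T ⊆ range (K + 1)) (c : ℕ → ℂ) :
    (∑ k ∈ T, Pi.single (fockIndex N K k) (c k) : Fin (K * N + 1) → ℂ) (Fin.last _)
      = if K ∈ T then c K else 0 := by
  rw [← fockIndex_self]
  exact sum_single_apply_of_injOn (injOn_fockIndex hN) (coe_subset.mpr hT) c
    (self_mem_range_succ K)

section ErrorTransparent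

variable {N K l : ℕ} {c : ℕ → ℂ} {A P H : Matrix (Fin (K * N + 1)) (Fin (K * N + 1)) ℂ}
  {T : Finset ℕ} {v : Fin (K * N + 1) → ℂ}

theorem moments_of_mem_errorSpan (hA : ∀ r, A (Fin.last _) r = 0)
    (hET : ∀ E ∈ errorSpan A (diagonal fun n : Fin (K * N + 1) => ((n : ℕ) : ℂ)) P l,
      H * E - E * H ∈ errorSpan A (diagonal fun n : Fin (K * N + 1) => ((n : ℕ) : ℂ)) P l)
    (hT : T ⊆ range (K + 1)) (hv : v = ∑ k ∈ T, Pi.single (fockIndex N K k) (c k))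
    (hv_last : v (Fin.last _) = 0) (hPv : P *ᵥ v = v) (hPHv : P *ᵥ (H *ᵥ v) = H *ᵥ v)
    {j : ℕ} (hj : j ≤ l / 2) :
    ∑ k ∈ T, H (Fin.last _) (fockIndex N K k) * c k * ((k * N : ℕ) : ℂ) ^ j
      = (H *ᵥ v) (Fin.last _) * ((K * N : ℕ) : ℂ) ^ j := by
  have hmem : diagonal (fun n : Fin (K * N + 1) => ((n : ℕ) : ℂ)) ^ j * P
      ∈ errorSpan A (diagonal fun n : Fin (K * N + 1) => ((n : ℕ) : ℂ)) P l :=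
    Submodule.subset_span ⟨_, ⟨0, j, by omega, by rw [pow_zero, one_mul]⟩, rfl⟩
  have h := mulVec_mulVec_apply_eq_of_commutator hPv hPHv
    (mulVec_apply_eq_zero_of_mem_errorSpan hA hv_last hPv (hET _ hmem))
  rw [diagonal_pow, mulVec_diagonal, mulVec_mulVec, hv, mulVec_sum_single_apply, ← hv] at h
  refine (sum_congr rfl fun k hk => ?_).trans (h.trans (by simp [mul_comm]))
  rw [mul_diagonal, Pi.pow_apply, val_fockIndex (mem_range_succ_iff.mp (hT hk))]
  ring

theorem exists_odd_squeezing_orders (hN : 0 < N) (hA : ∀ r, A (Fin.last _) r = 0)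
    (hET : ∀ E ∈ errorSpan A (diagonal fun n : Fin (K * N + 1) => ((n : ℕ) : ℂ)) P l,
      H * E - E * H ∈ errorSpan A (diagonal fun n : Fin (K * N + 1) => ((n : ℕ) : ℂ)) P l)
    (hT : ∀ k ∈ T, k < K ∧ Odd (K - k)) (hv : v = ∑ k ∈ T, Pi.single (fockIndex N K k) (c k))
    {ψ ψ' : Fin (K * N + 1) → ℂ} {lam lam' a b : ℂ} (hvψ : v = a • ψ + b • ψ')
    (hPψ : P *ᵥ ψ = ψ) (hPψ' : P *ᵥ ψ' = ψ') (hHψ : H *ᵥ ψ = lam • ψ)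
    (hHψ' : H *ᵥ ψ' = lam' • ψ') (hll : lam ≠ lam') (ha : a * ψ (Fin.last _) ≠ 0) :
    ∃ S : Finset ℕ, l / 2 + 1 ≤ #S ∧ ∀ u ∈ S, Odd u ∧ 0 < u ∧
      ∃ p q : Fin (K * N + 1), ((p : ℤ) - (q : ℤ)).natAbs = u * N ∧ H p q ≠ 0 := by
  have hTK : T ⊆ range (K + 1) := fun k hk => mem_range.mpr (Nat.lt_succ_of_lt (hT k hk).1)
  have hv_last : v (Fin.last _) = 0 := by
    rw [hv, sum_single_fockIndex_apply_last hN hTK]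
    exact if_neg fun hK => (hT K hK).1.false
  have hPv : P *ᵥ v = v := by rw [hvψ, mulVec_smul_add_smul_of_fixed hPψ hPψ']
  have hPHv : P *ᵥ (H *ᵥ v) = H *ᵥ v := by
    rw [hvψ, mulVec_smul_add_smul_of_eigen hHψ hHψ', mulVec_smul_add_smul_of_fixed hPψ hPψ']
  have hHv : (H *ᵥ v) (Fin.last _) ≠ 0 :=
    hvψ ▸ mulVec_smul_add_smul_apply_ne_zero hHψ hHψ' hll (hvψ ▸ hv_last) ha
  set w : ℕ → ℂ := fun k => H (Fin.last _) (fockIndex N K k) * c k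
  have hcard : l / 2 < #(T.filter fun k => w k ≠ 0) := by
    refine lt_card_of_moments (x := fun k => ((k * N : ℕ) : ℂ)) (w := w)
      (y := ((K * N : ℕ) : ℂ)) hHv (fun k hk => ?_) fun j hj => ?_
    · exact_mod_cast ((Nat.mul_lt_mul_right hN).mpr (hT k (mem_filter.mp hk).1).1).ne
    · rw [sum_filter_of_ne fun k _ hk => left_ne_zero_of_mul hk]
      exact moments_of_mem_errorSpan hA hET hTK hv hv_last hPv hPHv hj
  refine ⟨(T.filter fun k => w k ≠ 0).image (K - ·), ?_, ?_⟩
  · rw [card_image_of_injOn fun a ha b hb hab => ?_]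
    · omega
    · have := (hT a (mem_filter.mp ha).1).1
      have := (hT b (mem_filter.mp hb).1).1
      omega
  · simp only [mem_image, mem_filter]
    rintro _ ⟨k, ⟨hk, hw⟩, rfl⟩
    obtain ⟨hkK, hodd⟩ := hT k hk
    refine ⟨hodd, by omega, Fin.last _, fockIndex N K k, ?_, left_ne_zero_of_mul hw⟩
    rw [Fin.val_last, val_fockIndex hkK.le, Nat.sub_mul]
    have := Nat.mul_le_mul_right N hkK.le
    omega

end ErrorTransparent

theorem stmt_10_general (N K l : ℕ)
    (hlN : (l : ℤ) ≤ (N : ℤ) - 1)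
    (c : ℕ → ℂ) (hc : ∀ k ≤ K, c k ≠ 0)
    (hnorm0 : ∑ k ∈ (range (K + 1)).filter (fun k => Even k), ‖c k‖ ^ 2 = 1)
    (hnorm1 : ∑ k ∈ (range (K + 1)).filter (fun k => Odd k), ‖c k‖ ^ 2 = 1)
    (A : Matrix (Fin (K * N + 1)) (Fin (K * N + 1)) ℂ)
    (hA : ∀ p q : Fin (K * N + 1),
      A p q = if (p : ℕ) + 1 = (q : ℕ) then (Real.sqrt (q : ℕ) : ℂ) else 0)
    (D : Matrix (Fin (K * N + 1)) (Fin (K * N + 1)) ℂ)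
    (hD : D = Matrix.diagonal (fun n : Fin (K * N + 1) => ((n : ℕ) : ℂ)))
    (u0 u1 : Fin (K * N + 1) → ℂ)
    (hu0 : ∀ n : Fin (K * N + 1), u0 n =
      ∑ k ∈ (range (K + 1)).filter (fun k => Even k),
        if (n : ℕ) = k * N then c k else 0)
    (hu1 : ∀ n : Fin (K * N + 1), u1 n =
      ∑ k ∈ (range (K + 1)).filter (fun k => Odd k),
        if (n : ℕ) = k * N then c k else 0)
    (P : Matrix (Fin (K * N + 1)) (Fin (K * N + 1)) ℂ)
    (hP : P = Matrix.vecMulVec u0 (star u0) + Matrix.vecMulVec u1 (star u1))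
    (Eset : Set (Matrix (Fin (K * N + 1)) (Fin (K * N + 1)) ℂ))
    (hEset : Eset = {E | ∃ m j : ℕ, m + 2 * j ≤ l ∧ E = A ^ m * D ^ j})
    (V : Submodule ℂ (Matrix (Fin (K * N + 1)) (Fin (K * N + 1)) ℂ))
    (hV : V = Submodule.span ℂ ((fun E => E * P) '' Eset))
    (α : ℂ) (hα : α ≠ 0)
    (ψ ψ' : Fin (K * N + 1) → ℂ)
    (hψ : ψ = u0 + α • u1)
    (hψ' : ψ' = (starRingEnd ℂ) α • u0 - u1)
    (H : Matrix (Fin (K * N + 1)) (Fin (K * N + 1)) ℂ)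
    (hET : ∀ E ∈ V, H * E - E * H ∈ V)
    (lam lam' : ℂ) (hll : lam ≠ lam')
    (hHψ : H.mulVec ψ = lam • ψ) (hHψ' : H.mulVec ψ' = lam' • ψ') :
    ∃ S : Finset ℕ, l / 2 + 1 ≤ S.card ∧
      ∀ u ∈ S, Odd u ∧ 0 < u ∧
        ∃ p q : Fin (K * N + 1),
          ((p : ℤ) - (q : ℤ)).natAbs = u * N ∧ H p q ≠ 0 := by
  have hN : 0 < N := by omega
  replace hu0 := eq_sum_single_fockIndex (filter_subset _ _) hu0
  replace hu1 := eq_sum_single_fockIndex (filter_subset _ _) hu1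
  obtain ⟨hPu0, hPu1⟩ := projector_mulVec_codewords hN (filter_subset _ _) (filter_subset _ _)
    (disjoint_filter.mpr fun k _ h => Nat.not_odd_iff_even.mpr h) hnorm0 hnorm1 hu0 hu1
  rw [← hP] at hPu0 hPu1
  have hPψ : P *ᵥ ψ = ψ := by rw [hψ, mulVec_add, mulVec_smul, hPu0, hPu1]
  have hPψ' : P *ᵥ ψ' = ψ' := by rw [hψ', mulVec_sub, mulVec_smul, hPu0, hPu1]
  have hA_last : ∀ r, A (Fin.last _) r = 0 := fun r => by
    rw [hA]
    exact if_neg (by simp only [Fin.val_last]; omega)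
  subst hEset hD hV
  obtain ⟨hu0ψ, hu1ψ⟩ := eq_smul_add_smul_conj u0 u1 (α := α) rfl
  rw [← hψ, ← hψ'] at hu0ψ hu1ψ
  have hψ_last : ψ (Fin.last _) = if Even K then c K else α * c K := by
    simp only [hψ, Pi.add_apply, Pi.smul_apply, smul_eq_mul, hu0, hu1,
      sum_single_fockIndex_apply_last hN (filter_subset _ _), mem_filter, mem_range,
      Nat.lt_succ_self, true_and, ← Nat.not_even_iff_odd]
    split_ifs <;> ring
  rcases Nat.even_or_odd K with hK | hK
  · refine exists_odd_squeezing_orders hN hA_last hET (fun k hk => ?_) hu1 hu1ψ hPψ hPψ' hHψ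
      hHψ' hll ?_
    · simp only [mem_filter, mem_range, Nat.odd_iff, Nat.even_iff] at hk hK ⊢
      omega
    · simp [hψ_last, hK, one_add_mul_conj_ne_zero α, hα, hc K le_rfl]
  · refine exists_odd_squeezing_orders hN hA_last hET (fun k hk => ?_) hu0 hu0ψ hPψ hPψ' hHψ
      hHψ' hll ?_
    · simp only [mem_filter, mem_range, Nat.odd_iff, Nat.even_iff] at hk hK ⊢
      omega
    · simp [hψ_last, Nat.not_even_iff_odd.mpr hK, one_add_mul_conj_ne_zero α, hα,
        hc K le_rfl]

/-- Theorem 3 of the paper (for hard-cutoff codes): any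
Hermitian Hamiltonian `H` that is error-transparent (Definition 3:
`[H,E] ∈ V` for all `E ∈ V`, with `V` the span of the errors
`E = {A^m D^j : m + 2j ≤ l}` restricted to the codespace) and generates a
continuous amplitude-mixing gate (fixing logical eigenvectors
`ψ = u0 + α u1`, `ψ' = conj(α) u0 − u1` with `α ≠ 0` and distinct
eigenvalues) for an exactly `E_l`-correcting order-`N` rotation-symmetric
code must have nonzero entries at positions `|p − q| = uN` for at least
`⌊l/2⌋ + 1` distinct positive odd integers `u`, i.e. it requires at least
`⌊l/2⌋ + 1` odd orders of generalized squeezing. -/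
theorem stmt_10 (N K l : ℕ)
    (hlN : (l : ℤ) ≤ (N : ℤ) - 1) (hlK : l + 1 ≤ K)
    (c : ℕ → ℂ) (hc : ∀ k ≤ K, c k ≠ 0)
    (hnorm0 : ∑ k ∈ (range (K + 1)).filter (fun k => Even k), ‖c k‖ ^ 2 = 1)
    (hnorm1 : ∑ k ∈ (range (K + 1)).filter (fun k => Odd k), ‖c k‖ ^ 2 = 1)
    (hmom : ∀ l' ≤ l, ∑ k ∈ range (K + 1),
      (-1 : ℝ) ^ k * ((k : ℝ)) ^ l' * ‖c k‖ ^ 2 = 0)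
    (A : Matrix (Fin (K * N + 1)) (Fin (K * N + 1)) ℂ)
    (hA : ∀ p q : Fin (K * N + 1),
      A p q = if (p : ℕ) + 1 = (q : ℕ) then (Real.sqrt (q : ℕ) : ℂ) else 0)
    (D : Matrix (Fin (K * N + 1)) (Fin (K * N + 1)) ℂ)
    (hD : D = Matrix.diagonal (fun n : Fin (K * N + 1) => ((n : ℕ) : ℂ)))
    (u0 u1 : Fin (K * N + 1) → ℂ)
    (hu0 : ∀ n : Fin (K * N + 1), u0 n =
      ∑ k ∈ (range (K + 1)).filter (fun k => Even k),
        if (n : ℕ) = k * N then c k else 0)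
    (hu1 : ∀ n : Fin (K * N + 1), u1 n =
      ∑ k ∈ (range (K + 1)).filter (fun k => Odd k),
        if (n : ℕ) = k * N then c k else 0)
    (P : Matrix (Fin (K * N + 1)) (Fin (K * N + 1)) ℂ)
    (hP : P = Matrix.vecMulVec u0 (star u0) + Matrix.vecMulVec u1 (star u1))
    (Eset : Set (Matrix (Fin (K * N + 1)) (Fin (K * N + 1)) ℂ))
    (hEset : Eset = {E | ∃ m j : ℕ, m + 2 * j ≤ l ∧ E = A ^ m * D ^ j})
    (V : Submodule ℂ (Matrix (Fin (K * N + 1)) (Fin (K * N + 1)) ℂ))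
    (hV : V = Submodule.span ℂ ((fun E => E * P) '' Eset))
    (hKL : ∀ E₁ ∈ Eset, ∀ E₂ ∈ Eset,
      star u0 ⬝ᵥ (E₁ᴴ * E₂).mulVec u0 = star u1 ⬝ᵥ (E₁ᴴ * E₂).mulVec u1 ∧
      star u0 ⬝ᵥ (E₁ᴴ * E₂).mulVec u1 = 0)
    (α : ℂ) (hα : α ≠ 0)
    (ψ ψ' : Fin (K * N + 1) → ℂ)
    (hψ : ψ = u0 + α • u1)
    (hψ' : ψ' = (starRingEnd ℂ) α • u0 - u1)
    (hLI : LinearIndependent ℂ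
      (fun E : Eset => (E : Matrix (Fin (K * N + 1)) (Fin (K * N + 1)) ℂ).mulVec ψ))
    (H : Matrix (Fin (K * N + 1)) (Fin (K * N + 1)) ℂ)
    (hHerm : H.IsHermitian)
    (hET : ∀ E ∈ V, H * E - E * H ∈ V)
    (lam lam' : ℂ) (hll : lam ≠ lam')
    (hHψ : H.mulVec ψ = lam • ψ) (hHψ' : H.mulVec ψ' = lam' • ψ') :
    ∃ S : Finset ℕ, l / 2 + 1 ≤ S.card ∧
      ∀ u ∈ S, Odd u ∧ 0 < u ∧
        ∃ p q : Fin (K * N + 1),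
          ((p : ℤ) - (q : ℤ)).natAbs = u * N ∧ H p q ≠ 0 :=
  stmt_10_general N K l hlN c hc hnorm0 hnorm1 A hA D hD u0 u1 hu0 hu1 P hP Eset hEset V hV α hα ψ
    ψ' hψ hψ' H hET lam lam' hll hHψ hHψ'
end

section
/- Let m ∈ ℕ, let j_1 < … < j_m be distinct positive odd integers, let k_1 < … < k_m be distinct positive even integers, let α ∈ ℂ with α ≠ 0, and let γ_0, γ_1, …, γ_m, δ_1, …, δ_m be nonzero complex numbers. Then there is no tuple (x_1,…,x_m, y_0, y_1,…,y_m) ∈ ℂ^{2m+1} satisfying, for every r ∈ {0,…,m} (with the convention 0^0 = 1): Σ_{i=1}^{m} α j_i^r δ_i x_i + 0^r γ_0 y_0 + Σ_{i=1}^{m} k_i^r γ_i y_i = 0^r γ_0, and Σ_{i=1}^{m} (−j_i^r δ_i) x_i + conj(α)·(0^r γ_0 y_0 + Σ_{i=1}^{m} k_i^r γ_i y_i) = −0^r conj(α) γ_0. -/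
open Finset

/-!
Write `S r = ∑ i, j_i ^ r δ_i x_i`. Subtracting the second equation from `conj α` times the first
cancels every term in `y`, leaving `(|α|² + 1) S r = 2 · 0 ^ r · conj α · γ₀`. Hence `S r = 0` for
`1 ≤ r ≤ m`; since the nodes `j_i` are distinct and nonzero, the Vandermonde matrix forces all
`δ_i x_i = 0`, so `S 0 = 0`, contradicting `2 conj α γ₀ ≠ 0` at `r = 0`.
-/

theorem eq_zero_of_forall_sum_pow_succ_mul_eq_zero {R : Type*} [CommRing R] [IsDomain R] {m : ℕ}
    {f c : Fin m → R} (hf : Function.Injective f) (hf₀ : ∀ i, f i ≠ 0)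
    (h : ∀ r < m, ∑ i, f i ^ (r + 1) * c i = 0) : c = 0 := by
  have hfc : (fun i => f i * c i) = 0 :=
    Matrix.eq_zero_of_forall_pow_sum_mul_pow_eq_zero hf fun r => by
      rw [← h r r.isLt]
      exact sum_congr rfl fun i _ => by ring
  funext i
  exact (mul_eq_zero.mp (congrFun hfc i)).resolve_left (hf₀ i)

theorem Complex.conj_mul_self_add_one_ne_zero (α : ℂ) : starRingEnd ℂ α * α + 1 ≠ 0 := by
  rw [mul_comm, Complex.mul_conj]
  exact_mod_cast (add_pos_of_nonneg_of_pos (Complex.normSq_nonneg α) one_pos).ne'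

theorem stmt_11_general (m : ℕ) (j k : Fin m → ℕ)
    (hjmono : StrictMono j) (hjpos : ∀ i, 0 < j i)
    (α : ℂ) (hα : α ≠ 0)
    (γ0 : ℂ) (hγ0 : γ0 ≠ 0)
    (γ δ : Fin m → ℂ) :
    ¬ ∃ (x : Fin m → ℂ) (y0 : ℂ) (y : Fin m → ℂ),
      ∀ r ≤ m,
        ((∑ i, α * ((j i : ℂ)) ^ r * δ i * x i) + (0 : ℂ) ^ r * γ0 * y0 +
            (∑ i, ((k i : ℂ)) ^ r * γ i * y i) = (0 : ℂ) ^ r * γ0) ∧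
        ((∑ i, (-(((j i : ℂ)) ^ r) * δ i) * x i) +
            (starRingEnd ℂ) α * ((0 : ℂ) ^ r * γ0 * y0 +
              ∑ i, ((k i : ℂ)) ^ r * γ i * y i) =
          -((0 : ℂ) ^ r) * (starRingEnd ℂ) α * γ0) := by
  rintro ⟨x, y0, y, h⟩
  set S : ℕ → ℂ := fun r => ∑ i, (j i : ℂ) ^ r * (δ i * x i)
  have hS : ∀ r ≤ m, (starRingEnd ℂ α * α + 1) * S r = 2 * 0 ^ r * starRingEnd ℂ α * γ0 := by
    intro r hr
    obtain ⟨h₁, h₂⟩ := h r hr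
    have e₁ : ∑ i, α * (j i : ℂ) ^ r * δ i * x i = α * S r := by
      simp only [S, mul_sum]
      exact sum_congr rfl fun i _ => by ring
    have e₂ : ∑ i, (-((j i : ℂ) ^ r) * δ i) * x i = -S r := by
      simp only [S, ← sum_neg_distrib]
      exact sum_congr rfl fun i _ => by ring
    rw [e₁] at h₁
    rw [e₂] at h₂
    linear_combination starRingEnd ℂ α * h₁ - h₂
  have hδx : (fun i => δ i * x i) = 0 := by
    refine eq_zero_of_forall_sum_pow_succ_mul_eq_zero (f := fun i => (j i : ℂ))
      (Nat.cast_injective.comp hjmono.injective) (fun i => by exact_mod_cast (hjpos i).ne')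
      fun r hr => ?_
    simpa [Complex.conj_mul_self_add_one_ne_zero] using hS (r + 1) hr
  have hS₀ : S 0 = 0 := by simp [S, fun i => congrFun hδx i]
  simpa [hS₀, hα, hγ0] using hS 0 m.zero_le

/-- The inconsistent linear system (Eqs. linearSystem1,
linearSystem2 and matrixEquation) at the heart of the proof of Theorem 3 of
the paper: for distinct positive odd integers `j_1 < … < j_m`, distinct
positive even integers `k_1 < … < k_m`, `α ≠ 0` and nonzero weights
`γ_0, …, γ_m, δ_1, …, δ_m`, there is no tuple `(x, y_0, y)` satisfying, for
every `0 ≤ r ≤ m` (with `0^0 = 1`),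
`∑_i α j_i^r δ_i x_i + 0^r γ_0 y_0 + ∑_i k_i^r γ_i y_i = 0^r γ_0` and
`∑_i (−j_i^r δ_i) x_i + conj(α)(0^r γ_0 y_0 + ∑_i k_i^r γ_i y_i)
  = −0^r conj(α) γ_0`. -/
theorem stmt_11 (m : ℕ) (j k : Fin m → ℕ)
    (hjmono : StrictMono j) (hkmono : StrictMono k)
    (hjodd : ∀ i, Odd (j i)) (hjpos : ∀ i, 0 < j i)
    (hkeven : ∀ i, Even (k i)) (hkpos : ∀ i, 0 < k i)
    (α : ℂ) (hα : α ≠ 0)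
    (γ0 : ℂ) (hγ0 : γ0 ≠ 0)
    (γ δ : Fin m → ℂ) (hγ : ∀ i, γ i ≠ 0) (hδ : ∀ i, δ i ≠ 0) :
    ¬ ∃ (x : Fin m → ℂ) (y0 : ℂ) (y : Fin m → ℂ),
      ∀ r ≤ m,
        ((∑ i, α * ((j i : ℂ)) ^ r * δ i * x i) + (0 : ℂ) ^ r * γ0 * y0 +
            (∑ i, ((k i : ℂ)) ^ r * γ i * y i) = (0 : ℂ) ^ r * γ0) ∧
        ((∑ i, (-(((j i : ℂ)) ^ r) * δ i) * x i) +
            (starRingEnd ℂ) α * ((0 : ℂ) ^ r * γ0 * y0 +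
              ∑ i, ((k i : ℂ)) ^ r * γ i * y i) =
          -((0 : ℂ) ^ r) * (starRingEnd ℂ) α * γ0) :=
  stmt_11_general m j k hjmono hjpos α hα γ0 hγ0 γ δ
end

section
/- Let m, K ∈ ℕ with K ≥ 2m + 1, let c : {0,…,K} → ℂ with c_k ≠ 0 for all k, and let α ∈ ℂ with α ≠ 0. For j ∈ {0,…,m} define ψ^{(j)}, φ^{(j)} ∈ ℂ^{K+1} (convention 0^0 = 1) by: ψ^{(j)}_k = k^j c_k if k is even and ψ^{(j)}_k = α k^j c_k if k is odd; φ^{(j)}_k = conj(α) k^j c_k if k is even and φ^{(j)}_k = −k^j c_k if k is odd. If H ∈ M_{K+1}(ℂ) satisfies H ψ^{(j)} = ψ^{(j)} and H φ^{(j)} = −φ^{(j)} for every j ∈ {0,…,m}, then the 0-th row of H has at least m + 1 nonzero entries in odd columns, i.e., #{q : q odd, 0 ≤ q ≤ K, H_{0,q} ≠ 0} ≥ m + 1. -/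
open Finset

/-- Second half of the proof of Theorem 3 of the paper: any
Hamiltonian with the naive error-transparent eigenstructure (`+1` on all the
no-jump error words `ψ^{(j)} = n^j(|0_L⟩ + α|1_L⟩)` and `−1` on all
`φ^{(j)} = n^j(conj(α)|0_L⟩ − |1_L⟩)`, for `j = 0, …, m`) must have at least
`m + 1` nonzero entries in odd columns of its `0`-th row, i.e. must use at
least `m + 1` odd off-diagonal couplings. -/
theorem stmt_12 (m K : ℕ) (hK : 2 * m + 1 ≤ K)
    (c : Fin (K + 1) → ℂ) (hc : ∀ k, c k ≠ 0)
    (α : ℂ) (hα : α ≠ 0)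
    (ψ φ : ℕ → Fin (K + 1) → ℂ)
    (hψ : ∀ (j : ℕ) (k : Fin (K + 1)), ψ j k =
      if Even (k : ℕ) then ((k : ℕ) : ℂ) ^ j * c k
      else α * (((k : ℕ) : ℂ) ^ j * c k))
    (hφ : ∀ (j : ℕ) (k : Fin (K + 1)), φ j k =
      if Even (k : ℕ) then (starRingEnd ℂ) α * (((k : ℕ) : ℂ) ^ j * c k)
      else -(((k : ℕ) : ℂ) ^ j * c k))
    (H : Matrix (Fin (K + 1)) (Fin (K + 1)) ℂ)
    (hHψ : ∀ j ≤ m, H.mulVec (ψ j) = ψ j)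
    (hHφ : ∀ j ≤ m, H.mulVec (φ j) = -(φ j)) :
    m + 1 ≤ {q : Fin (K + 1) | Odd (q : ℕ) ∧ H 0 q ≠ 0}.ncard := by
  classical
  set a : ℂ := (starRingEnd ℂ) α with ha_def
  have ha : a ≠ 0 := by
    simp [ha_def, hα]
  have haa : a * α + 1 ≠ 0 := by
    have h1 : a * α = (Complex.normSq α : ℂ) := by
      rw [ha_def, ← Complex.normSq_eq_conj_mul_self]
    rw [h1]
    have : ((Complex.normSq α : ℝ) : ℂ) + 1 = ((Complex.normSq α + 1 : ℝ) : ℂ) := by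
      push_cast; ring
    rw [this]
    rw [Complex.ofReal_ne_zero]
    have hn := Complex.normSq_nonneg α
    intro h; linarith
  set T : Finset (Fin (K + 1)) :=
    Finset.univ.filter (fun q => Odd (q : ℕ) ∧ H 0 q ≠ 0) with hT_def
  set S : ℕ → ℂ := fun j => ∑ q ∈ T, H 0 q * (((q : ℕ) : ℂ) ^ j * c q) with hS_def
  -- the moment identities
  have moment : ∀ j ≤ m, (a * α + 1) * S j = 2 * a * ((0 : ℂ) ^ j * c 0) := by
    intro j hj
    have e1 : ∑ q, H 0 q * ψ j q = ψ j 0 := by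
      have := congrFun (hHψ j hj) 0
      simpa [Matrix.mulVec, dotProduct] using this
    have e2 : ∑ q, H 0 q * φ j q = -(φ j 0) := by
      have := congrFun (hHφ j hj) 0
      simpa [Matrix.mulVec, dotProduct] using this
    have comb : ∑ q, H 0 q * (a * ψ j q - φ j q) = a * ψ j 0 + φ j 0 := by
      have : ∑ q, H 0 q * (a * ψ j q - φ j q)
          = a * (∑ q, H 0 q * ψ j q) - ∑ q, H 0 q * φ j q := by
        rw [Finset.mul_sum, ← Finset.sum_sub_distrib]
        apply Finset.sum_congr rfl
        intro q _
        ring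
      rw [this, e1, e2]
      ring
    have term : ∀ q : Fin (K + 1), H 0 q * (a * ψ j q - φ j q)
        = if Odd (q : ℕ) then (a * α + 1) * (H 0 q * (((q : ℕ) : ℂ) ^ j * c q)) else 0 := by
      intro q
      rw [hψ, hφ]
      rcases Nat.even_or_odd (q : ℕ) with h | h
      · have h' : ¬ Odd (q : ℕ) := Nat.not_odd_iff_even.mpr h
        rw [if_pos h, if_pos h, if_neg h']
        ring
      · have h' : ¬ Even (q : ℕ) := Nat.not_even_iff_odd.mpr h
        rw [if_neg h', if_neg h', if_pos h]
        ring
    have lhs : ∑ q, H 0 q * (a * ψ j q - φ j q)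
        = (a * α + 1) * ∑ q ∈ Finset.univ.filter (fun q : Fin (K + 1) => Odd (q : ℕ)),
            H 0 q * (((q : ℕ) : ℂ) ^ j * c q) := by
      rw [Finset.mul_sum, Finset.sum_filter]
      apply Finset.sum_congr rfl
      intro q _
      exact term q
    have rhs : a * ψ j 0 + φ j 0 = 2 * a * ((0 : ℂ) ^ j * c 0) := by
      rw [hψ, hφ]
      have h0 : ((0 : Fin (K + 1)) : ℕ) = 0 := rfl
      simp only [h0, Nat.cast_zero, if_pos Even.zero]
      try ring
    have hsub : T = (Finset.univ.filter (fun q : Fin (K + 1) => Odd (q : ℕ))).filter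
        (fun q => H 0 q ≠ 0) := by
      rw [hT_def, Finset.filter_filter]
    have hsum : S j = ∑ q ∈ Finset.univ.filter (fun q : Fin (K + 1) => Odd (q : ℕ)),
        H 0 q * (((q : ℕ) : ℂ) ^ j * c q) := by
      show ∑ q ∈ T, H 0 q * (((q : ℕ) : ℂ) ^ j * c q) = _
      rw [hsub]
      exact Finset.sum_filter_of_ne (fun q _ hq h0 => hq (by rw [h0, zero_mul]))
    rw [lhs, rhs] at comb
    rw [hsum]
    exact comb
  have hS0 : S 0 ≠ 0 := by
    intro h0
    have hm := moment 0 (Nat.zero_le m)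
    rw [h0, mul_zero] at hm
    have hne : 2 * a * ((0 : ℂ) ^ 0 * c 0) ≠ 0 := by
      simp only [pow_zero, one_mul]
      exact mul_ne_zero (mul_ne_zero two_ne_zero ha) (hc 0)
    exact hne hm.symm
  have hSj : ∀ j, 1 ≤ j → j ≤ m → S j = 0 := by
    intro j h1 hj
    have hm := moment j hj
    have h0 : (0 : ℂ) ^ j = 0 := zero_pow (by omega)
    rw [h0, zero_mul, mul_zero] at hm
    exact (mul_eq_zero.mp hm).resolve_left haa
  -- identify the set with the finset T
  have hset : {q : Fin (K + 1) | Odd (q : ℕ) ∧ H 0 q ≠ 0} = ↑T := by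
    ext q; simp [hT_def]
  rw [hset, Set.ncard_coe_finset]
  -- suppose not: T.card ≤ m, use a Vandermonde-type polynomial argument
  by_contra hcard
  push_neg at hcard
  have hTm : T.card ≤ m := by omega
  set P : Polynomial ℂ := ∏ q ∈ T, (Polynomial.X - Polynomial.C ((q : ℕ) : ℂ)) with hP_def
  have hPdeg : P.natDegree ≤ m := by
    have h1 : P.natDegree = T.card := by
      rw [hP_def, Polynomial.natDegree_prod _ _ (fun q _ => Polynomial.X_sub_C_ne_zero _)]
      trans ∑ _q ∈ T, 1
      · exact Finset.sum_congr rfl fun q _ => Polynomial.natDegree_X_sub_C _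
      · simp
    omega
  have hPnode : ∀ q ∈ T, P.eval ((q : ℕ) : ℂ) = 0 := by
    intro q hq
    rw [hP_def, Polynomial.eval_prod]
    apply Finset.prod_eq_zero hq
    simp
  have hP0 : P.coeff 0 ≠ 0 := by
    rw [Polynomial.coeff_zero_eq_eval_zero, hP_def, Polynomial.eval_prod]
    apply Finset.prod_ne_zero_iff.mpr
    intro q hq
    simp only [Polynomial.eval_sub, Polynomial.eval_X, Polynomial.eval_C, zero_sub,
      neg_ne_zero, Ne, Nat.cast_eq_zero]
    have hodd : Odd (q : ℕ) := by
      rw [hT_def] at hq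
      exact (Finset.mem_filter.mp hq).2.1
    intro h0
    rw [h0] at hodd
    exact (Nat.not_odd_iff_even.mpr Even.zero) hodd
  have hzero : ∑ q ∈ T, H 0 q * c q * P.eval ((q : ℕ) : ℂ) = 0 := by
    apply Finset.sum_eq_zero
    intro q hq
    rw [hPnode q hq, mul_zero]
  have hexpand : ∑ q ∈ T, H 0 q * c q * P.eval ((q : ℕ) : ℂ)
      = ∑ j ∈ Finset.range (m + 1), P.coeff j * S j := by
    have heval : ∀ q : Fin (K + 1), P.eval ((q : ℕ) : ℂ)
        = ∑ j ∈ Finset.range (m + 1), P.coeff j * ((q : ℕ) : ℂ) ^ j := by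
      intro q
      exact Polynomial.eval_eq_sum_range' (by omega) _
    calc ∑ q ∈ T, H 0 q * c q * P.eval ((q : ℕ) : ℂ)
        = ∑ q ∈ T, ∑ j ∈ Finset.range (m + 1),
            P.coeff j * (H 0 q * (((q : ℕ) : ℂ) ^ j * c q)) := by
          apply Finset.sum_congr rfl
          intro q _
          rw [heval, Finset.mul_sum]
          apply Finset.sum_congr rfl
          intro j _
          ring
      _ = ∑ j ∈ Finset.range (m + 1), ∑ q ∈ T,
            P.coeff j * (H 0 q * (((q : ℕ) : ℂ) ^ j * c q)) := Finset.sum_comm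
      _ = ∑ j ∈ Finset.range (m + 1), P.coeff j * S j := by
          apply Finset.sum_congr rfl
          intro j _
          rw [hS_def, Finset.mul_sum]
  have hsingle : ∑ j ∈ Finset.range (m + 1), P.coeff j * S j = P.coeff 0 * S 0 := by
    apply Finset.sum_eq_single_of_mem 0 (Finset.mem_range.mpr (by omega))
    intro j hj hj0
    rw [hSj j (by omega) (Nat.lt_succ_iff.mp (Finset.mem_range.mp hj)), mul_zero]
  rw [hexpand, hsingle] at hzero
  exact (mul_ne_zero hP0 hS0) hzero
end

section
/- Let n ∈ ℕ, let u_0, u_1 ∈ ℂ^n be orthonormal, let α ∈ ℂ with α ≠ 0, and set ψ = u_0 + α u_1, ψ' = conj(α) u_0 − u_1, and P_C = u_0 u_0^† + u_1 u_1^†. Let E ⊆ M_n(ℂ) be a finite set of matrices and V = span_ℂ{E P_C : E ∈ E}. Suppose H ∈ M_n(ℂ) satisfies [H, E] ∈ V for every E ∈ V, and H ψ = λ ψ, H ψ' = λ' ψ' for some λ, λ' ∈ ℂ. Then: (a) H maps W_ψ = span{E ψ : E ∈ E} into itself and W_{ψ'} = span{E ψ' : E ∈ E} into itself; (b) if moreover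 E_1, …, E_d ∈ V are such that {ψ, E_1 ψ, …, E_d ψ} is a linearly independent family of eigenvectors of H with eigenvalues λ, λ_1, …, λ_d, and {P_C, E_1, …, E_d} spans V, then for each i the vector E_i ψ' is an eigenvector of H with eigenvalue λ_i − λ + λ'. -/
open Finset Matrix

lemma vecMulVec_mulVec' {n : ℕ} (w v x : Fin n → ℂ) :
    (Matrix.vecMulVec w v).mulVec x = (v ⬝ᵥ x) • w := by
  ext i
  simp [Matrix.vecMulVec, Matrix.mulVec, dotProduct, Finset.mul_sum,
    mul_assoc, mul_comm, mul_left_comm]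

/-- `M ↦ M *ᵥ v` as a linear map in the matrix. -/
noncomputable def mulVecAtₗ {n : ℕ} (v : Fin n → ℂ) :
    Matrix (Fin n) (Fin n) ℂ →ₗ[ℂ] (Fin n → ℂ) where
  toFun M := M.mulVec v
  map_add' A B := Matrix.add_mulVec A B v
  map_smul' a A := Matrix.smul_mulVec a A v

/-- Lemma 2 (reduction-to-naive-form) in the proof of
Theorem 3 of the paper.  Let `u0, u1` be orthonormal, `ψ = u0 + α u1`,
`ψ' = conj(α) u0 − u1` (`α ≠ 0`), `P_C = u0 u0† + u1 u1†`, `E` a finite set of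
matrices and `V = span{E P_C : E ∈ E}`.  If `H` is error-transparent
(`[H,E] ∈ V` for all `E ∈ V`) with `H ψ = λ ψ`, `H ψ' = λ' ψ'`, then (a) `H`
maps `W_ψ = span{Eψ}` and `W_{ψ'} = span{Eψ'}` into themselves, and (b) for
any `E_1, …, E_d ∈ V` such that `{ψ, E_1ψ, …, E_dψ}` is a linearly independent
family of eigenvectors of `H` with eigenvalues `λ, λ_1, …, λ_d` and
`{P_C, E_1, …, E_d}` spans `V`, each `E_i ψ'` is an eigenvector of `H` with
eigenvalue `λ_i − λ + λ'`. -/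
theorem stmt_13 (n : ℕ) (u0 u1 : Fin n → ℂ)
    (h00 : star u0 ⬝ᵥ u0 = 1) (h11 : star u1 ⬝ᵥ u1 = 1)
    (h01 : star u0 ⬝ᵥ u1 = 0) (h10 : star u1 ⬝ᵥ u0 = 0)
    (α : ℂ) (hα : α ≠ 0)
    (ψ ψ' : Fin n → ℂ)
    (hψ : ψ = u0 + α • u1)
    (hψ' : ψ' = (starRingEnd ℂ) α • u0 - u1)
    (P : Matrix (Fin n) (Fin n) ℂ)
    (hP : P = Matrix.vecMulVec u0 (star u0) + Matrix.vecMulVec u1 (star u1))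
    (Eset : Finset (Matrix (Fin n) (Fin n) ℂ))
    (V : Submodule ℂ (Matrix (Fin n) (Fin n) ℂ))
    (hV : V = Submodule.span ℂ ((fun E => E * P) '' (Eset : Set (Matrix (Fin n) (Fin n) ℂ))))
    (H : Matrix (Fin n) (Fin n) ℂ)
    (hET : ∀ E ∈ V, H * E - E * H ∈ V)
    (lam lam' : ℂ)
    (hHψ : H.mulVec ψ = lam • ψ) (hHψ' : H.mulVec ψ' = lam' • ψ') :
    (∀ x ∈ Submodule.span ℂ
        ((fun E : Matrix (Fin n) (Fin n) ℂ => E.mulVec ψ) '' (Eset : Set _)),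
      H.mulVec x ∈ Submodule.span ℂ
        ((fun E : Matrix (Fin n) (Fin n) ℂ => E.mulVec ψ) '' (Eset : Set _))) ∧
    (∀ x ∈ Submodule.span ℂ
        ((fun E : Matrix (Fin n) (Fin n) ℂ => E.mulVec ψ') '' (Eset : Set _)),
      H.mulVec x ∈ Submodule.span ℂ
        ((fun E : Matrix (Fin n) (Fin n) ℂ => E.mulVec ψ') '' (Eset : Set _))) ∧
    (∀ (d : ℕ) (Efam : Fin d → Matrix (Fin n) (Fin n) ℂ) (lamfam : Fin d → ℂ),
      (∀ i, Efam i ∈ V) →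
      LinearIndependent ℂ
        (Fin.cons ψ (fun i => (Efam i).mulVec ψ) : Fin (d + 1) → (Fin n → ℂ)) →
      (∀ i, H.mulVec ((Efam i).mulVec ψ) = lamfam i • (Efam i).mulVec ψ) →
      Submodule.span ℂ (insert P (Set.range Efam)) = V →
      ∀ i, H.mulVec ((Efam i).mulVec ψ') =
        (lamfam i - lam + lam') • (Efam i).mulVec ψ') := by
  -- P fixes ψ and ψ'
  have hPψ : P.mulVec ψ = ψ := by
    subst hP hψ
    simp [Matrix.add_mulVec, vecMulVec_mulVec', dotProduct_add, dotProduct_smul,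
      h00, h11, h01, h10, smul_smul]
  have hPψ' : P.mulVec ψ' = ψ' := by
    subst hP hψ'
    simp [Matrix.add_mulVec, vecMulVec_mulVec', dotProduct_sub, dotProduct_smul,
      h00, h11, h01, h10, smul_smul, sub_eq_add_neg]
  -- key: applying any element of V to a P-fixed vector lands in the span
  have key : ∀ (v : Fin n → ℂ), P.mulVec v = v → ∀ M ∈ V,
      M.mulVec v ∈ Submodule.span ℂ
        ((fun E : Matrix (Fin n) (Fin n) ℂ => E.mulVec v) '' (Eset : Set _)) := by
    intro v hv M hM
    rw [hV] at hM
    induction hM using Submodule.span_induction with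
    | mem M hMm =>
      obtain ⟨E, hE, rfl⟩ := hMm
      have : (E * P).mulVec v = E.mulVec v := by
        rw [← Matrix.mulVec_mulVec, hv]
      rw [this]
      exact Submodule.subset_span ⟨E, hE, rfl⟩
    | zero => simp
    | add M N _ _ hM hN => rw [Matrix.add_mulVec]; exact Submodule.add_mem _ hM hN
    | smul a M _ hM => rw [Matrix.smul_mulVec]; exact Submodule.smul_mem _ _ hM
  -- part (a), generic
  have partA : ∀ (v : Fin n → ℂ) (μ : ℂ), P.mulVec v = v → H.mulVec v = μ • v →
      ∀ x ∈ Submodule.span ℂ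
        ((fun E : Matrix (Fin n) (Fin n) ℂ => E.mulVec v) '' (Eset : Set _)),
      H.mulVec x ∈ Submodule.span ℂ
        ((fun E : Matrix (Fin n) (Fin n) ℂ => E.mulVec v) '' (Eset : Set _)) := by
    intro v μ hv hHv x hx
    induction hx using Submodule.span_induction with
    | mem x hxm =>
      obtain ⟨E, hE, rfl⟩ := hxm
      have hEP : (E * P) ∈ V := hV ▸ Submodule.subset_span ⟨E, hE, rfl⟩
      have hcom := hET _ hEP
      have hEv : E.mulVec v = (E * P).mulVec v := by
        rw [← Matrix.mulVec_mulVec, hv]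
      have expand : H.mulVec (E.mulVec v)
          = (H * (E * P) - (E * P) * H).mulVec v + μ • (E.mulVec v) := by
        rw [Matrix.sub_mulVec, ← Matrix.mulVec_mulVec v H (E * P),
          ← Matrix.mulVec_mulVec v (E * P) H, hHv, Matrix.mulVec_smul, ← hEv]
        abel
      rw [expand]
      exact Submodule.add_mem _ (key v hv _ hcom)
        (Submodule.smul_mem _ _ (Submodule.subset_span ⟨E, hE, rfl⟩))
    | zero => simp
    | add x y _ _ hX hY => rw [Matrix.mulVec_add]; exact Submodule.add_mem _ hX hY
    | smul a x _ hX => rw [Matrix.mulVec_smul]; exact Submodule.smul_mem _ _ hX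
  refine ⟨partA ψ lam hPψ hHψ, partA ψ' lam' hPψ' hHψ', ?_⟩
  -- part (b)
  intro d Efam lamfam hEV hli heig hspan i
  set C := H * Efam i - Efam i * H with hCdef
  have hCV : C ∈ V := hET _ (hEV i)
  set g : Fin (d + 1) → Matrix (Fin n) (Fin n) ℂ := Fin.cons P Efam with hg
  have hCspan : C ∈ Submodule.span ℂ (Set.range g) := by
    rw [hg, Fin.range_cons, hspan]; exact hCV
  obtain ⟨c, hc⟩ := (Submodule.mem_span_range_iff_exists_fun ℂ).mp hCspan
  set vψ : Fin (d + 1) → (Fin n → ℂ) :=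
    Fin.cons ψ (fun j => (Efam j).mulVec ψ) with hvψ
  have hgψ : ∀ j, (g j).mulVec ψ = vψ j := by
    intro j
    refine Fin.cases ?_ ?_ j <;> simp [hg, hvψ, hPψ]
  -- apply C to ψ
  have hCψ : C.mulVec ψ = (lamfam i - lam) • (Efam i).mulVec ψ := by
    rw [hCdef, Matrix.sub_mulVec, ← Matrix.mulVec_mulVec ψ H (Efam i),
      ← Matrix.mulVec_mulVec ψ (Efam i) H, heig i, hHψ, Matrix.mulVec_smul, sub_smul]
  have hsumψ : ∑ j, c j • vψ j = (lamfam i - lam) • vψ i.succ := by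
    have h1 : (mulVecAtₗ ψ) (∑ j, c j • g j) = (mulVecAtₗ ψ) C := by rw [hc]
    rw [map_sum] at h1
    simp only [_root_.map_smul] at h1
    have h2 : ∀ j, (mulVecAtₗ ψ) (g j) = vψ j := hgψ
    simp only [h2] at h1
    rw [h1]
    show C.mulVec ψ = _
    rw [hCψ]
    simp [hvψ]
  -- linear independence pins down the coefficients
  have hcoef : ∀ j, c j = if j = i.succ then lamfam i - lam else 0 := by
    have hli' := Fintype.linearIndependent_iff.mp hli
    intro j
    have h0 : ∑ k, (c k - if k = i.succ then lamfam i - lam else 0) • vψ k = 0 := by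
      simp only [sub_smul, ite_smul, zero_smul, Finset.sum_sub_distrib]
      rw [hsumψ]
      simp only [smul_ite, smul_zero, Finset.sum_ite_eq', Finset.mem_univ, if_true]
      rw [sub_smul]
      abel
    exact sub_eq_zero.mp (hli' _ h0 j)
  -- hence C = (λᵢ - λ) • Eᵢ
  have hCeq : C = (lamfam i - lam) • Efam i := by
    rw [← hc]
    have : ∀ j, c j • g j = if j = i.succ then (lamfam i - lam) • g j else 0 := by
      intro j; rw [hcoef j]; split <;> simp
    simp only [this]
    rw [Finset.sum_ite_eq' Finset.univ i.succ (fun j => (lamfam i - lam) • g j)]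
    simp [hg]
  -- conclude
  have hHE : H * Efam i = (lamfam i - lam) • Efam i + Efam i * H := by
    rw [← hCeq, hCdef]; abel
  rw [Matrix.mulVec_mulVec ψ' H (Efam i), hHE, Matrix.add_mulVec,
    Matrix.smul_mulVec, ← Matrix.mulVec_mulVec ψ' (Efam i) H, hHψ',
    Matrix.mulVec_smul]
  rw [← add_smul]
end

section
/- For integers K ≥ 2 and 1 ≤ k ≤ K − 1, the following identity of real numbers holds: Σ_{j=1}^{k} (−1)^{j+k} j · C(K, j) = (1/(K−1)) · √(k · C(K,k) · (k+1) · C(K,k+1)) · √(k(K−k)), where C(n,r) denotes the binomial coefficient. -/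
open Finset

lemma sum_id (m s : ℕ) :
    ∑ j ∈ Icc 1 (s + 1), (-1 : ℝ) ^ (j + (s + 1)) * (j : ℝ) * ((m + 2).choose j : ℝ)
      = (m + 2 : ℝ) * (m.choose s : ℝ) := by
  induction s with
  | zero => simp
  | succ s ih =>
    rw [Finset.sum_Icc_succ_top (by omega)]
    have h1 : ∀ j : ℕ, (-1 : ℝ) ^ (j + (s + 1 + 1)) = -(-1 : ℝ) ^ (j + (s + 1)) := by
      intro j
      rw [show j + (s + 1 + 1) = (j + (s + 1)) + 1 by ring, pow_succ]
      ring
    have hsum : ∑ j ∈ Icc 1 (s + 1), (-1 : ℝ) ^ (j + (s + 1 + 1)) * (j : ℝ) * ((m + 2).choose j : ℝ)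
        = -((m + 2 : ℝ) * (m.choose s : ℝ)) := by
      rw [← ih, ← Finset.sum_neg_distrib]
      exact Finset.sum_congr rfl (fun j _ => by rw [h1]; ring)
    rw [hsum]
    have hpow : (-1 : ℝ) ^ (s + 1 + 1 + (s + 1 + 1)) = 1 := by
      rw [show s + 1 + 1 + (s + 1 + 1) = 2 * (s + 2) by ring, pow_mul]
      norm_num
    rw [hpow]
    have hn : (m + 2) * (m + 1).choose (s + 1) = (m + 2).choose (s + 2) * (s + 2) :=
      Nat.add_one_mul_choose_eq (m + 1) (s + 1)
    have hp : (m + 1).choose (s + 1) = m.choose s + m.choose (s + 1) :=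
      Nat.choose_succ_succ m s
    rw [hp] at hn
    have hcast : ((m : ℝ) + 2) * ((m.choose s : ℝ) + (m.choose (s + 1) : ℝ))
        = ((m + 2).choose (s + 2) : ℝ) * ((s : ℝ) + 2) := by exact_mod_cast hn
    push_cast
    linarith [hcast]

lemma nat_id (m s : ℕ) (hs : s ≤ m) :
    (s + 1) * (m + 1 - s) * (m + 2).choose (s + 1) = (m + 2) * (m + 1) * m.choose s := by
  have h1 : (s + 1) * (m + 2).choose (s + 1) = (m + 2) * (m + 1).choose s := by
    rw [mul_comm]; exact (Nat.add_one_mul_choose_eq (m + 1) s).symm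
  have h2 : (m + 1).choose (s + 1) * (s + 1) = (m + 1).choose s * (m + 1 - s) :=
    Nat.choose_succ_right_eq (m + 1) s
  have h3 : (s + 1) * (m + 1).choose (s + 1) = (m + 1) * m.choose s := by
    rw [mul_comm]; exact (Nat.add_one_mul_choose_eq m s).symm
  calc (s + 1) * (m + 1 - s) * (m + 2).choose (s + 1)
      = (m + 1 - s) * ((s + 1) * (m + 2).choose (s + 1)) := by ring
    _ = (m + 1 - s) * ((m + 2) * (m + 1).choose s) := by rw [h1]
    _ = (m + 2) * ((m + 1).choose s * (m + 1 - s)) := by ring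
    _ = (m + 2) * ((m + 1).choose (s + 1) * (s + 1)) := by rw [h2]
    _ = (m + 2) * ((s + 1) * (m + 1).choose (s + 1)) := by ring
    _ = (m + 2) * ((m + 1) * m.choose s) := by rw [h3]
    _ = (m + 2) * (m + 1) * m.choose s := by ring

/-- Spin-operator identity for the first error parity
manifold of the binomial code (Section 5 of the paper): for integers `K ≥ 2`
and `1 ≤ k ≤ K − 1`,
`∑_{j=1}^{k} (−1)^{j+k} j·C(K,j)
  = (1/(K−1)) √(k·C(K,k)·(k+1)·C(K,k+1)) √(k(K−k))`,
i.e. the single-photon-loss error words of the binomial code are spin-coherent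
states of spin `(K−1)/2` on the `±x` axes. -/
theorem stmt_15 (K k : ℕ) (hK : 2 ≤ K) (hk1 : 1 ≤ k) (hk : k ≤ K - 1) :
    ∑ j ∈ Icc 1 k, (-1 : ℝ) ^ (j + k) * (j : ℝ) * (K.choose j : ℝ) =
      (1 / ((K : ℝ) - 1)) *
        Real.sqrt ((k : ℝ) * (K.choose k : ℝ) * ((k : ℝ) + 1) * (K.choose (k + 1) : ℝ)) *
        Real.sqrt ((k : ℝ) * ((K : ℝ) - (k : ℝ))) := by
  obtain ⟨m, rfl⟩ : ∃ m, K = m + 2 := ⟨K - 2, by omega⟩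
  obtain ⟨s, rfl⟩ : ∃ s, k = s + 1 := ⟨k - 1, by omega⟩
  have hs : s ≤ m := by omega
  rw [sum_id m s]
  set C1 : ℕ := (m + 2).choose (s + 1) with hC1
  have hms : ((m + 1 - s : ℕ) : ℝ) = (m : ℝ) + 1 - (s : ℝ) := by
    push_cast [Nat.cast_sub (show s ≤ m + 1 by omega)]; ring
  set X : ℝ := ((s : ℝ) + 1) * ((m : ℝ) + 1 - (s : ℝ)) with hXdef
  have hXnn : 0 ≤ X := by
    have : (s : ℝ) ≤ (m : ℝ) := by exact_mod_cast hs
    have h1 : (0 : ℝ) ≤ (s : ℝ) + 1 := by positivity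
    nlinarith
  have hchoose2 : (m + 2).choose (s + 1 + 1) * (s + 1 + 1) = C1 * (m + 1 - s) := by
    rw [show m + 1 - s = m + 2 - (s + 1) by omega]
    exact Nat.choose_succ_right_eq (m + 2) (s + 1)
  have hc2 : ((m + 2).choose (s + 1 + 1) : ℝ) * ((s : ℝ) + 2) = (C1 : ℝ) * ((m : ℝ) + 1 - (s : ℝ)) := by
    have := congrArg (Nat.cast : ℕ → ℝ) hchoose2
    push_cast [hms] at this
    linarith [this]
  have harg : ((s + 1 : ℕ) : ℝ) * (C1 : ℝ) * (((s + 1 : ℕ) : ℝ) + 1) * ((m + 2).choose (s + 1 + 1) : ℝ)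
      = (C1 : ℝ) ^ 2 * X := by
    push_cast
    rw [hXdef]
    linear_combination ((s : ℝ) + 1) * (C1 : ℝ) * hc2
  rw [harg, Real.sqrt_mul (sq_nonneg _), Real.sqrt_sq (by positivity : (0:ℝ) ≤ (C1:ℝ))]
  push_cast
  rw [show ((s : ℝ) + 1) * ((m : ℝ) + 2 - ((s : ℝ) + 1)) = X by rw [hXdef]; ring]
  have hmul : Real.sqrt X * Real.sqrt X = X := Real.mul_self_sqrt hXnn
  have hnid := congrArg (Nat.cast : ℕ → ℝ) (nat_id m s hs)
  push_cast [hms] at hnid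
  have hden : ((m : ℝ) + 2) - 1 ≠ 0 := by
    have : (0 : ℝ) ≤ (m : ℝ) := Nat.cast_nonneg m
    intro h; linarith
  rw [show (1 : ℝ) / ((m : ℝ) + 2 - 1) * ((C1 : ℝ) * Real.sqrt X) * Real.sqrt X
      = (1 : ℝ) / ((m : ℝ) + 1) * ((C1 : ℝ) * (Real.sqrt X * Real.sqrt X)) by ring,
    hmul]
  rw [hXdef]
  field_simp
  linear_combination -hnid
end
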